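/- arXiv:2005.12572 — 3 statements merged into one kernel-verified Lean document; each statement's English description precedes it below -/
import Mathlib

section
/- Under the general EMOT setting with the growth/continuity assumption, suppose P(ĉ) < +∞ for some ĉ ∈ B_{0:T}. Let λ ∈ (C_{0:T})* satisfy λ ≥ 0 and λ(1) = 1, and let λ_t denote the restriction of λ to C_{0:t}. If D(λ_0,…,λ_T) := sup_{φ ∈ E} ( U(φ) − Σ_{t=0}^T λ_t(φ_t) ) < +∞, then there exists a unique Q ∈ Prob¹(Ω) representing λ on C_{0:T}, i.e. λ(φ) = ∫_Ω φ dQ for every φ ∈ C_{0:T}. -/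
open MeasureTheory Filter Topology
open scoped ENNReal BigOperators

noncomputable section

namespace EMOT

/-- The nonnegative part of an extended real number, as an element of `ℝ≥0∞`. -/
def posPart (a : EReal) : ℝ≥0∞ := if a = ⊤ then ⊤ else ENNReal.ofReal a.toReal

/-- The (possibly infinite) integral of an `EReal`-valued function, defined as the
difference of the lower integrals of its positive and negative parts. -/
def eInt {X : Type} [MeasurableSpace X] (μ : Measure X) (f : X → EReal) : EReal :=
  ((∫⁻ x, posPart (f x) ∂μ : ℝ≥0∞) : EReal) - ((∫⁻ x, posPart (-(f x)) ∂μ : ℝ≥0∞) : EReal)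

variable {T d : ℕ}

/-- The path space `Ω = ∏_{t=0}^T ∏_{j=1}^d K_t^j`. -/
abbrev PathSpace (K : Fin (T + 1) → Fin d → Set ℝ) : Type :=
  { x : Fin (T + 1) → Fin d → ℝ // ∀ t j, x t j ∈ K t j }

variable (K : Fin (T + 1) → Fin d → Set ℝ)

/-- The weight `Σ_{t,j} |x_t^j|`. -/
def wt (x : PathSpace K) : ℝ := ∑ t, ∑ j, |x.1 t j|

/-- The partial weight `Σ_{s ≤ t, j} |x_s^j|`. -/
def wtTo (t : Fin (T + 1)) (x : PathSpace K) : ℝ :=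
  ∑ s ∈ Finset.univ.filter (fun s => s ≤ t), ∑ j, |x.1 s j|

/-- Membership in `C_{0:T}`: continuous with linear growth. -/
def memC (φ : PathSpace K → ℝ) : Prop :=
  Continuous φ ∧ ∃ M : ℝ, ∀ x, |φ x| ≤ M * (1 + wt K x)

/-- Membership in `B_{0:T}`: Borel measurable with linear growth. -/
def memB (φ : PathSpace K → ℝ) : Prop :=
  Measurable φ ∧ ∃ M : ℝ, ∀ x, |φ x| ≤ M * (1 + wt K x)

/-- Membership in `C_{0:t}`: continuous, growth controlled by the partial weight,
and depending only on the coordinates up to time `t`. -/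
def memCto (t : Fin (T + 1)) (φ : PathSpace K → ℝ) : Prop :=
  Continuous φ ∧ (∃ M : ℝ, ∀ x, |φ x| ≤ M * (1 + wtTo K t x)) ∧
    ∀ x y : PathSpace K, (∀ s, s ≤ t → x.1 s = y.1 s) → φ x = φ y

/-- The weighted sup-norm `‖φ‖_{0:T}`. -/
def wnorm (φ : PathSpace K → ℝ) : ℝ :=
  ⨆ x : PathSpace K, |φ x| / (1 + wt K x)

/-- The standing hypotheses of the general EMOT setting: closed nonempty factor sets,
vector subspaces `ℝ ⊆ E_t ⊆ C_{0:t}`, a proper concave functional `U` with `U(0) ∈ ℝ`,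
and a convex cone `A ⊆ C_{0:T}` with `0 ∈ A`. -/
structure IsSetting
    (E : Fin (T + 1) → Set (PathSpace K → ℝ))
    (U : (Fin (T + 1) → PathSpace K → ℝ) → EReal)
    (A : Set (PathSpace K → ℝ)) : Prop where
  K_nonempty : ∀ t j, (K t j).Nonempty
  K_closed : ∀ t j, IsClosed (K t j)
  E_subset : ∀ t, ∀ φ ∈ E t, memCto K t φ
  E_const : ∀ t (r : ℝ), (fun _ => r) ∈ E t
  E_add : ∀ t, ∀ φ ∈ E t, ∀ ψ ∈ E t, φ + ψ ∈ E t
  E_smul : ∀ t (r : ℝ), ∀ φ ∈ E t, r • φ ∈ E t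
  U_ne_top : ∀ φ, (∀ t, φ t ∈ E t) → U φ ≠ ⊤
  U_zero_real : U (fun _ _ => 0) ≠ ⊥
  U_concave : ∀ φ ψ, (∀ t, φ t ∈ E t) → (∀ t, ψ t ∈ E t) → ∀ a : ℝ, 0 ≤ a → a ≤ 1 →
    (a : EReal) * U φ + ((1 - a : ℝ) : EReal) * U ψ ≤
      U (fun t => a • φ t + (1 - a) • ψ t)
  A_subset : ∀ z ∈ A, memC K z
  A_zero : (fun _ => (0 : ℝ)) ∈ A
  A_add : ∀ z₁ ∈ A, ∀ z₂ ∈ A, z₁ + z₂ ∈ A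
  A_smul : ∀ c : ℝ, 0 < c → ∀ z ∈ A, c • z ∈ A

/-- Membership in `E = E_0 × … × E_T`. -/
def memE (E : Fin (T + 1) → Set (PathSpace K → ℝ))
    (φ : Fin (T + 1) → PathSpace K → ℝ) : Prop := ∀ t, φ t ∈ E t

/-- The generalized optimized certainty equivalent `S^U`. -/
def SU (U : (Fin (T + 1) → PathSpace K → ℝ) → EReal)
    (φ : Fin (T + 1) → PathSpace K → ℝ) : EReal :=
  ⨆ β : Fin (T + 1) → ℝ, (U (fun t x => φ t x + β t) - ((∑ t, β t : ℝ) : EReal))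

/-- The set `Φ_z(c)` of subhedging static parts. -/
def Phi (E : Fin (T + 1) → Set (PathSpace K → ℝ))
    (U : (Fin (T + 1) → PathSpace K → ℝ) → EReal)
    (z : PathSpace K → ℝ) (c : PathSpace K → EReal) :
    Set (Fin (T + 1) → PathSpace K → ℝ) :=
  { φ | memE K E φ ∧ SU K U φ ≠ ⊥ ∧
      ∀ x, (((∑ t, φ t x) + z x : ℝ) : EReal) ≤ c x }

/-- The primal (nonlinear subhedging) value `P(c)`, with the convention `sup ∅ = -∞`. -/
def P (E : Fin (T + 1) → Set (PathSpace K → ℝ))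
    (U : (Fin (T + 1) → PathSpace K → ℝ) → EReal)
    (A : Set (PathSpace K → ℝ)) (c : PathSpace K → EReal) : EReal :=
  ⨆ (z : PathSpace K → ℝ) (_ : -z ∈ A) (φ ∈ Phi K E U z c), SU K U φ

/-- `P` evaluated on a real-valued payoff. -/
def PB (E : Fin (T + 1) → Set (PathSpace K → ℝ))
    (U : (Fin (T + 1) → PathSpace K → ℝ) → EReal)
    (A : Set (PathSpace K → ℝ)) (c : PathSpace K → ℝ) : EReal :=
  P K E U A (fun x => ((c x : ℝ) : EReal))

/-- The penalization `D(Q)`, convex conjugate of `U`. -/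
def D (E : Fin (T + 1) → Set (PathSpace K → ℝ))
    (U : (Fin (T + 1) → PathSpace K → ℝ) → EReal)
    (Q : Measure (PathSpace K)) : EReal :=
  ⨆ (φ : Fin (T + 1) → PathSpace K → ℝ) (_ : memE K E φ),
    (U φ - ((∑ t, ∫ x, φ t x ∂Q : ℝ) : EReal))

/-- `Q ∈ Prob¹(Ω)`: a Borel probability measure integrating all coordinates. -/
def Prob1 (Q : Measure (PathSpace K)) : Prop :=
  IsProbabilityMeasure Q ∧ ∀ t j, Integrable (fun x : PathSpace K => x.1 t j) Q

/-- `Q ∈ A°`. -/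
def inPolar (A : Set (PathSpace K → ℝ)) (Q : Measure (PathSpace K)) : Prop :=
  ∀ z ∈ A, ∫ x, z x ∂Q ≤ 0

/-- `σ_A(Q) = sup_{z ∈ A} ∫ z dQ`. -/
def sigmaA (A : Set (PathSpace K → ℝ)) (Q : Measure (PathSpace K)) : EReal :=
  ⨆ (z : PathSpace K → ℝ) (_ : z ∈ A), ((∫ x, z x ∂Q : ℝ) : EReal)

/-- The growth/continuity assumption: there are compact sets `𝔎_t(n)` and nonnegative
functions `f_t^n ∈ E_t` dominating the weight off the compacts, with
`V(Γ f^n) = -U(-Γ f^n) → 0`. -/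
def Growth (E : Fin (T + 1) → Set (PathSpace K → ℝ))
    (U : (Fin (T + 1) → PathSpace K → ℝ) → EReal) : Prop :=
  ∃ (𝒦 : ℕ → Fin (T + 1) → Set (Fin d → ℝ)) (f : ℕ → Fin (T + 1) → PathSpace K → ℝ),
    (∀ n t, IsCompact (𝒦 n t)) ∧
    (∀ n t, f n t ∈ E t) ∧
    (∀ n t x, 0 ≤ f n t x) ∧
    (∀ n (x : PathSpace K), (¬ ∀ t, (fun j => x.1 t j) ∈ 𝒦 n t) →
      1 + wt K x ≤ ∑ t, f n t x) ∧
    (∀ Γ : ℝ, 0 < Γ →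
      Tendsto (fun n => - U (fun t x => -(Γ * f n t x))) atTop (nhds (0 : EReal)))

/-- Admissible dynamic trading strategies `H^d`. -/
def Adapted (Δ : Fin T → PathSpace K → Fin d → ℝ) : Prop :=
  ∀ t : Fin T, (∀ j, Continuous (fun x => Δ t x j)) ∧
    (∃ M : ℝ, ∀ x j, |Δ t x j| ≤ M) ∧
    (∀ x y : PathSpace K, (∀ s : Fin (T + 1), s ≤ t.castSucc → x.1 s = y.1 s) →
      Δ t x = Δ t y)

/-- The elementary stochastic integral `I^Δ`. -/
def stochInt (Δ : Fin T → PathSpace K → Fin d → ℝ) (x : PathSpace K) : ℝ :=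
  ∑ t : Fin T, ∑ j, Δ t x j * (x.1 t.succ j - x.1 t.castSucc j)

/-- Martingale measures: `Q ∈ Prob¹(Ω)` with `E_Q[I^Δ] = 0` for all `Δ ∈ H^d`. -/
def Mart (Q : Measure (PathSpace K)) : Prop :=
  Prob1 K Q ∧ ∀ Δ, Adapted K Δ → ∫ x, stochInt K Δ x ∂Q = 0

/-- The set of static parts of semistatic subhedging strategies for `c`. -/
def Ssub (E : Fin (T + 1) → Set (PathSpace K → ℝ))
    (U : (Fin (T + 1) → PathSpace K → ℝ) → EReal)
    (c : PathSpace K → EReal) : Set (Fin (T + 1) → PathSpace K → ℝ) :=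
  { φ | memE K E φ ∧ SU K U φ ≠ ⊥ ∧
      ∃ Δ, Adapted K Δ ∧ ∀ x, (((∑ t, φ t x) + stochInt K Δ x : ℝ) : EReal) ≤ c x }

/-- Linearity and norm-continuity of a functional on `C_{0:T}`. -/
def IsLinC (lam : (PathSpace K → ℝ) → ℝ) : Prop :=
  (∀ φ ψ, memC K φ → memC K ψ → lam (φ + ψ) = lam φ + lam ψ) ∧
  (∀ (r : ℝ) (φ : PathSpace K → ℝ), memC K φ → lam (r • φ) = r * lam φ) ∧
  (∃ M : ℝ, ∀ φ, memC K φ → |lam φ| ≤ M * wnorm K φ)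

/-- Positivity of a functional on `C_{0:T}`. -/
def IsPos (lam : (PathSpace K → ℝ) → ℝ) : Prop :=
  ∀ φ, memC K φ → (∀ x, 0 ≤ φ x) → 0 ≤ lam φ

/-- The convex conjugate `P*` of the primal functional `P`, on the dual of `C_{0:T}`. -/
def Pstar (E : Fin (T + 1) → Set (PathSpace K → ℝ))
    (U : (Fin (T + 1) → PathSpace K → ℝ) → EReal)
    (A : Set (PathSpace K → ℝ)) (lam : (PathSpace K → ℝ) → ℝ) : EReal :=
  ⨆ (c : PathSpace K → ℝ) (_ : memC K c), (PB K E U A c - ((lam c : ℝ) : EReal))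

/-- The conjugate `(S^U)*(λ_0,…,λ_T)`, where `λ_t` is the restriction of `λ` to `C_{0:t}`. -/
def SUstar (E : Fin (T + 1) → Set (PathSpace K → ℝ))
    (U : (Fin (T + 1) → PathSpace K → ℝ) → EReal)
    (lam : (PathSpace K → ℝ) → ℝ) : EReal :=
  ⨆ (φ : Fin (T + 1) → PathSpace K → ℝ) (_ : memE K E φ),
    (SU K U φ - ((∑ t, lam (φ t) : ℝ) : EReal))

/-- The penalization `D(λ_0,…,λ_T)` on dual elements. -/
def Dlam (E : Fin (T + 1) → Set (PathSpace K → ℝ))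
    (U : (Fin (T + 1) → PathSpace K → ℝ) → EReal)
    (lam : (PathSpace K → ℝ) → ℝ) : EReal :=
  ⨆ (φ : Fin (T + 1) → PathSpace K → ℝ) (_ : memE K E φ),
    (U φ - ((∑ t, lam (φ t) : ℝ) : EReal))

/-- The support function `σ_A(λ) = sup_{z ∈ A} λ(z)`. -/
def sigmaAlam (A : Set (PathSpace K → ℝ)) (lam : (PathSpace K → ℝ) → ℝ) : EReal :=
  ⨆ (z : PathSpace K → ℝ) (_ : z ∈ A), ((lam z : ℝ) : EReal)

/-- The weak topology `σ((C_{0:T})*, C_{0:T})` restricted to measures: the topology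
generated by the evaluation maps `Q ↦ ∫ φ dQ`, `φ ∈ C_{0:T}`. -/
def weakTop : TopologicalSpace (Measure (PathSpace K)) :=
  TopologicalSpace.induced
    (fun Q => fun φ : {φ : PathSpace K → ℝ // memC K φ} => ∫ x, φ.1 x ∂Q)
    inferInstance
end EMOT


/-! ### Riesz–Markov–Kakutani machinery (auxiliary) -/

namespace RMKaux

variable {X : Type} [MetricSpace X]

/-- bounded continuous real function (plain). -/
def Cb (f : X → ℝ) : Prop := Continuous f ∧ ∃ M : ℝ, ∀ x, |f x| ≤ M

lemma Cb.const (r : ℝ) : Cb (fun _ : X => r) :=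
  ⟨continuous_const, ⟨|r|, fun _ => le_refl _⟩⟩

lemma Cb.add {f g : X → ℝ} (hf : Cb f) (hg : Cb g) : Cb (f + g) := by
  obtain ⟨cf, Mf, hMf⟩ := hf; obtain ⟨cg, Mg, hMg⟩ := hg
  exact ⟨cf.add cg, Mf + Mg, fun x => (abs_add_le _ _).trans (add_le_add (hMf x) (hMg x))⟩

lemma Cb.smul (r : ℝ) {f : X → ℝ} (hf : Cb f) : Cb (r • f) := by
  obtain ⟨cf, Mf, hMf⟩ := hf
  refine ⟨cf.const_smul r, |r| * Mf, fun x => ?_⟩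
  simp only [Pi.smul_apply, smul_eq_mul, abs_mul]
  exact mul_le_mul_of_nonneg_left (hMf x) (abs_nonneg r)

lemma Cb.sub {f g : X → ℝ} (hf : Cb f) (hg : Cb g) : Cb (f - g) := by
  have : f - g = f + (-1 : ℝ) • g := by funext x; simp; ring
  rw [this]; exact hf.add (hg.smul (-1))

lemma Cb.mul {f g : X → ℝ} (hf : Cb f) (hg : Cb g) : Cb (f * g) := by
  obtain ⟨cf, Mf, hMf⟩ := hf; obtain ⟨cg, Mg, hMg⟩ := hg
  refine ⟨cf.mul cg, Mf * Mg, fun x => ?_⟩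
  rw [Pi.mul_apply, abs_mul]
  exact mul_le_mul (hMf x) (hMg x) (abs_nonneg _) ((abs_nonneg _).trans (hMf x))

/-- A positive linear functional on bounded continuous functions. -/
structure IsPosLin (lam : (X → ℝ) → ℝ) : Prop where
  add : ∀ f g, Cb f → Cb g → lam (f + g) = lam f + lam g
  smul : ∀ (r : ℝ) (f), Cb f → lam (r • f) = r * lam f
  pos : ∀ f, Cb f → (∀ x, 0 ≤ f x) → 0 ≤ lam f

variable {lam : (X → ℝ) → ℝ} (hl : IsPosLin lam)

include hl

lemma IsPosLin.zero : lam (fun _ => 0) = 0 := by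
  have h := hl.smul 0 (fun _ => 0) (Cb.const 0)
  have : (0 : ℝ) • (fun _ : X => (0:ℝ)) = fun _ : X => (0:ℝ) := by funext x; simp
  rw [this] at h; simpa using h

lemma IsPosLin.mono {f g : X → ℝ} (hf : Cb f) (hg : Cb g) (h : ∀ x, f x ≤ g x) :
    lam f ≤ lam g := by
  have hfg : Cb (g - f) := hg.sub hf
  have hpos : 0 ≤ lam (g - f) := hl.pos _ hfg (fun x => by simp [h x])
  have : lam (f + (g - f)) = lam f + lam (g - f) := hl.add _ _ hf hfg
  have h2 : f + (g - f) = g := by funext x; simp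
  rw [h2] at this
  linarith

/-- test functions for a set `K`. -/
def testFns (K : Set X) : Set (X → ℝ) :=
  {f | Cb f ∧ (∀ x, 0 ≤ f x) ∧ ∀ x ∈ K, 1 ≤ f x}

omit hl in
lemma one_mem_testFns (K : Set X) : (fun _ : X => (1:ℝ)) ∈ testFns K :=
  ⟨Cb.const 1, fun _ => zero_le_one, fun _ _ => le_refl _⟩

/-- the content associated with `lam`. -/
def rCont (lam : (X → ℝ) → ℝ) (K : Set X) : ℝ := sInf (lam '' testFns K)

lemma testFns_nonneg {K : Set X} {r : ℝ} (hr : r ∈ lam '' testFns K) : 0 ≤ r := by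
  obtain ⟨f, hf, rfl⟩ := hr
  exact hl.pos f hf.1 hf.2.1

lemma testFns_bddBelow (K : Set X) : BddBelow (lam '' testFns K) :=
  ⟨0, fun r hr => testFns_nonneg hl hr⟩

lemma rCont_nonneg (K : Set X) : 0 ≤ rCont lam K :=
  le_csInf ⟨lam (fun _ => 1), Set.mem_image_of_mem _ (one_mem_testFns K)⟩
    (fun r hr => testFns_nonneg hl hr)

lemma rCont_le {K : Set X} {f : X → ℝ} (hf : f ∈ testFns K) : rCont lam K ≤ lam f :=
  csInf_le (testFns_bddBelow hl K) (Set.mem_image_of_mem _ hf)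

lemma le_rCont {K : Set X} {c : ℝ} (h : ∀ f ∈ testFns K, c ≤ lam f) : c ≤ rCont lam K :=
  le_csInf ⟨lam (fun _ => 1), Set.mem_image_of_mem _ (one_mem_testFns K)⟩
    (by rintro r ⟨f, hf, rfl⟩; exact h f hf)

lemma rCont_mono {K₁ K₂ : Set X} (h : K₁ ⊆ K₂) : rCont lam K₁ ≤ rCont lam K₂ :=
  csInf_le_csInf (testFns_bddBelow hl K₁)
    ⟨lam (fun _ => 1), Set.mem_image_of_mem _ (one_mem_testFns K₂)⟩
    (Set.image_mono (fun f hf => ⟨hf.1, hf.2.1, fun x hx => hf.2.2 x (h hx)⟩))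

lemma exists_test_lt {K : Set X} {ε : ℝ} (hε : 0 < ε) :
    ∃ f ∈ testFns K, lam f < rCont lam K + ε := by
  obtain ⟨r, hr, hlt⟩ := exists_lt_of_csInf_lt
    (⟨lam (fun _ => 1), Set.mem_image_of_mem _ (one_mem_testFns K)⟩ :
      (lam '' testFns K).Nonempty) (lt_add_of_pos_right (rCont lam K) hε)
  obtain ⟨f, hf, rfl⟩ := hr
  exact ⟨f, hf, hlt⟩

lemma rCont_empty : rCont lam (∅ : Set X) = 0 := by
  refine le_antisymm ?_ (rCont_nonneg hl _)
  have h0 : (fun _ : X => (0:ℝ)) ∈ testFns (∅ : Set X) :=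
    ⟨Cb.const 0, fun _ => le_refl _, fun x hx => absurd hx (Set.notMem_empty x)⟩
  have := rCont_le hl h0
  rwa [hl.zero] at this

lemma rCont_union_le (K₁ K₂ : Set X) :
    rCont lam (K₁ ∪ K₂) ≤ rCont lam K₁ + rCont lam K₂ := by
  refine le_of_forall_pos_le_add (fun ε hε => ?_)
  obtain ⟨f₁, hf₁, hl₁⟩ := exists_test_lt hl (K := K₁) (half_pos hε)
  obtain ⟨f₂, hf₂, hl₂⟩ := exists_test_lt hl (K := K₂) (half_pos hε)
  have hmem : f₁ + f₂ ∈ testFns (K₁ ∪ K₂) := by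
    refine ⟨Cb.add hf₁.1 hf₂.1, fun x => add_nonneg (hf₁.2.1 x) (hf₂.2.1 x), ?_⟩
    rintro x (hx | hx)
    · exact le_add_of_le_of_nonneg (hf₁.2.2 x hx) (hf₂.2.1 x)
    · exact le_add_of_nonneg_of_le (hf₁.2.1 x) (hf₂.2.2 x hx)
  calc rCont lam (K₁ ∪ K₂) ≤ lam (f₁ + f₂) := rCont_le hl hmem
    _ = lam f₁ + lam f₂ := hl.add _ _ hf₁.1 hf₂.1
    _ ≤ rCont lam K₁ + ε/2 + (rCont lam K₂ + ε/2) := add_le_add hl₁.le hl₂.le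
    _ = rCont lam K₁ + rCont lam K₂ + ε := by ring

lemma rCont_union_disjoint [NormalSpace X] {K₁ K₂ : Set X} (h₁ : IsClosed K₁)
    (h₂ : IsClosed K₂) (hd : Disjoint K₁ K₂) :
    rCont lam (K₁ ∪ K₂) = rCont lam K₁ + rCont lam K₂ := by
  refine le_antisymm (rCont_union_le hl K₁ K₂) ?_
  refine le_of_forall_pos_le_add (fun ε hε => ?_)
  obtain ⟨f, hf, hflt⟩ := exists_test_lt hl (K := K₁ ∪ K₂) hε
  obtain ⟨g, hg0, hg1, hg01⟩ := exists_continuous_zero_one_of_isClosed h₁ h₂ hd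
  -- g = 0 on K₁, g = 1 on K₂
  have hgCb : Cb (fun x => g x) := ⟨g.continuous, 1, fun x => abs_le.2
    ⟨by linarith [(hg01 x).1], (hg01 x).2⟩⟩
  have h1g : Cb (fun x => 1 - g x) := (Cb.const 1).sub hgCb
  have hf₁ : f * (fun x => 1 - g x) ∈ testFns K₁ := by
    refine ⟨hf.1.mul h1g, fun x => mul_nonneg (hf.2.1 x) (by show (0:ℝ) ≤ 1 - g x; linarith [(hg01 x).2]), ?_⟩
    intro x hx
    have : g x = 0 := hg0 hx
    have h1 : (1:ℝ) ≤ f x := hf.2.2 x (Or.inl hx)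
    simp only [Pi.mul_apply, this]
    linarith
  have hf₂ : f * (fun x => g x) ∈ testFns K₂ := by
    refine ⟨hf.1.mul hgCb, fun x => mul_nonneg (hf.2.1 x) (hg01 x).1, ?_⟩
    intro x hx
    have hgx : g x = 1 := hg1 hx
    have h1 : (1:ℝ) ≤ f x := hf.2.2 x (Or.inr hx)
    simp only [Pi.mul_apply, hgx]
    linarith
  have hsum : f * (fun x => 1 - g x) + f * (fun x => g x) = f := by
    funext x; simp only [Pi.add_apply, Pi.mul_apply]; ring
  have hlam : lam (f * (fun x => 1 - g x)) + lam (f * (fun x => g x)) = lam f := by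
    rw [← hl.add _ _ (hf.1.mul h1g) (hf.1.mul hgCb), hsum]
  calc rCont lam K₁ + rCont lam K₂
      ≤ lam (f * (fun x => 1 - g x)) + lam (f * (fun x => g x)) :=
        add_le_add (rCont_le hl hf₁) (rCont_le hl hf₂)
    _ = lam f := hlam
    _ ≤ rCont lam (K₁ ∪ K₂) + ε := hflt.le

/-- The content (in the sense of Mathlib) associated with a positive linear functional. -/
def rieszContent : Content X where
  toFun K := Real.toNNReal (rCont lam K)
  mono' K₁ K₂ h := Real.toNNReal_mono (rCont_mono hl h)
  sup_disjoint' K₁ K₂ hd hc₁ hc₂ := by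
    simp only [TopologicalSpace.Compacts.coe_sup]
    rw [rCont_union_disjoint hl hc₁ hc₂ hd,
      Real.toNNReal_add (rCont_nonneg hl _) (rCont_nonneg hl _)]
  sup_le' K₁ K₂ := by
    simp only [TopologicalSpace.Compacts.coe_sup]
    refine le_trans (Real.toNNReal_mono (rCont_union_le hl _ _)) ?_
    exact Real.toNNReal_add_le


section Measure
variable [ProperSpace X] [MeasurableSpace X] [BorelSpace X]

/-- The Riesz measure associated with `lam`. -/
def rmkMeasure : Measure X := (rieszContent hl).measure

lemma rieszContent_apply (K : TopologicalSpace.Compacts X) :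
    ((rieszContent hl) K : ℝ≥0∞) = ENNReal.ofReal (rCont lam K) := rfl

lemma rmkMeasure_finiteOnCompacts : IsFiniteMeasureOnCompacts (rmkMeasure hl) := by
  constructor
  intro K hK
  rw [rmkMeasure, (rieszContent hl).measure_apply hK.isClosed.measurableSet]
  exact (rieszContent hl).outerMeasure_lt_top_of_isCompact hK

lemma rmkMeasure_compact_ne_top {K : Set X} (hK : IsCompact K) : rmkMeasure hl K ≠ ⊤ := by
  have := (rmkMeasure_finiteOnCompacts hl).lt_top_of_isCompact hK
  exact this.ne

lemma rmkMeasure_le_lam {K : Set X} (hK : IsCompact K) {f : X → ℝ} (hf : f ∈ testFns K) :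
    rmkMeasure hl K ≤ ENNReal.ofReal (lam f) := by
  have hL0 : 0 ≤ lam f := hl.pos f hf.1 hf.2.1
  set L := lam f with hLdef
  -- step: for every ε ∈ (0,1), μ K ≤ ofReal ((1-ε)⁻¹ * L)
  have key : ∀ ε : ℝ, 0 < ε → ε < 1 → rmkMeasure hl K ≤ ENNReal.ofReal ((1-ε)⁻¹ * L) := by
    intro ε hε hε1
    have h1ε : (0:ℝ) < 1 - ε := by linarith
    set U : Set X := f ⁻¹' Set.Ioi (1-ε) with hUdef
    have hUopen : IsOpen U := isOpen_Ioi.preimage hf.1.1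
    have hKU : K ⊆ U := fun x hx => by
      have := hf.2.2 x hx
      simp only [hUdef, Set.mem_preimage, Set.mem_Ioi]
      linarith
    have hμU : rmkMeasure hl U = (rieszContent hl).innerContent ⟨U, hUopen⟩ := by
      rw [rmkMeasure, (rieszContent hl).measure_apply hUopen.measurableSet]
      exact (rieszContent hl).outerMeasure_opens ⟨U, hUopen⟩
    have hinner : (rieszContent hl).innerContent ⟨U, hUopen⟩ ≤
        ENNReal.ofReal ((1-ε)⁻¹ * L) := by
      rw [Content.innerContent]
      refine iSup₂_le (fun K' hK' => ?_)
      rw [rieszContent_apply]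
      refine ENNReal.ofReal_le_ofReal ?_
      refine rCont_le hl (f := (1-ε)⁻¹ • f) ?_ |>.trans ?_
      · refine ⟨hf.1.smul _, fun x => mul_nonneg (by positivity) (hf.2.1 x), ?_⟩
        intro x hx
        have hfx : 1 - ε < f x := hK' hx
        have : (1-ε)⁻¹ * (1-ε) ≤ (1-ε)⁻¹ * f x :=
          mul_le_mul_of_nonneg_left hfx.le (by positivity)
        rwa [inv_mul_cancel₀ h1ε.ne'] at this
      · rw [hl.smul _ _ hf.1]
    calc rmkMeasure hl K ≤ rmkMeasure hl U := measure_mono hKU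
      _ ≤ ENNReal.ofReal ((1-ε)⁻¹ * L) := hμU ▸ hinner
  -- now conclude
  refine ENNReal.le_of_forall_pos_le_add (fun δ hδ _ => ?_)
  set δ' : ℝ := min (δ : ℝ) 1 with hδ'def
  have hδ'0 : 0 < δ' := lt_min (by exact_mod_cast hδ) one_pos
  have hδ'1 : δ' ≤ 1 := min_le_right _ _
  set ε : ℝ := min (1/2) (δ' / (2 * (L + 1))) with hεdef
  have hε0 : 0 < ε := lt_min (by norm_num) (by positivity)
  have hε1 : ε < 1 := lt_of_le_of_lt (min_le_left _ _) (by norm_num)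
  have hεhalf : ε ≤ 1/2 := min_le_left _ _
  have hεδ : ε * (2 * (L + 1)) ≤ δ' := by
    have := min_le_right (1/2) (δ' / (2 * (L + 1)))
    calc ε * (2 * (L + 1)) ≤ (δ' / (2 * (L + 1))) * (2 * (L + 1)) :=
          mul_le_mul_of_nonneg_right this (by positivity)
      _ = δ' := by field_simp
  have hmain : (1-ε)⁻¹ * L ≤ L + δ' := by
    rw [inv_mul_le_iff₀ (by linarith : (0:ℝ) < 1 - ε)]
    nlinarith [hl.pos f hf.1 hf.2.1]
  calc rmkMeasure hl K ≤ ENNReal.ofReal ((1-ε)⁻¹ * L) := key ε hε0 hε1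
    _ ≤ ENNReal.ofReal (L + δ') := ENNReal.ofReal_le_ofReal hmain
    _ ≤ ENNReal.ofReal L + ENNReal.ofReal δ' := ENNReal.ofReal_add_le
    _ ≤ ENNReal.ofReal L + δ := by
        refine add_le_add_right ?_ _
        rw [← ENNReal.ofReal_coe_nnreal]
        exact ENNReal.ofReal_le_ofReal (min_le_left _ _)

lemma rCont_le_measure {K : Set X} (hK : IsCompact K) :
    ENNReal.ofReal (rCont lam K) ≤ rmkMeasure hl K := by
  rw [rmkMeasure, (rieszContent hl).measure_apply hK.isClosed.measurableSet]
  exact (rieszContent hl).le_outerMeasure_compacts ⟨K, hK⟩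

lemma lam_le_measure {g : X → ℝ} (hg : Cb g) (hg0 : ∀ x, 0 ≤ g x) (hg1 : ∀ x, g x ≤ 1)
    (hsupp : HasCompactSupport g) :
    lam g ≤ (rmkMeasure hl (tsupport g)).toReal := by
  have h1 : lam g ≤ rCont lam (tsupport g) := by
    refine le_rCont hl (fun f hf => hl.mono hg hf.1 (fun x => ?_))
    by_cases hx : x ∈ tsupport g
    · exact (hg1 x).trans (hf.2.2 x hx)
    · rw [image_eq_zero_of_notMem_tsupport hx]; exact hf.2.1 x
  have h2 : ENNReal.ofReal (rCont lam (tsupport g)) ≤ rmkMeasure hl (tsupport g) :=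
    rCont_le_measure hl hsupp
  have h3 := ENNReal.toReal_mono (rmkMeasure_compact_ne_top hl hsupp) h2
  rw [ENNReal.toReal_ofReal (rCont_nonneg hl _)] at h3
  exact h1.trans h3

end Measure
end RMKaux

namespace RMKaux3

lemma sum_slice (δ a : ℝ) (hδ : 0 ≤ δ) (ha : 0 ≤ a) : ∀ N : ℕ,
    ∑ i ∈ Finset.range N, min (max (a - i*δ) 0) δ = min a (N*δ) := by
  intro N
  induction N with
  | zero => simp [min_eq_right ha]
  | succ N ih =>
    rw [Finset.sum_range_succ, ih]
    push_cast
    rcases le_or_gt a (N*δ) with h | h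
    · have h1 : a - N*δ ≤ 0 := by linarith
      rw [max_eq_right h1, min_eq_left hδ, min_eq_left h, min_eq_left (by nlinarith)]
      ring_nf
    · rw [min_eq_right h.le]
      rcases le_or_gt a ((N+1)*δ) with h2 | h2
      · rw [min_eq_left h2, max_eq_left (by linarith), min_eq_left (by nlinarith)]
        ring
      · rw [min_eq_right h2.le, max_eq_left (by nlinarith), min_eq_right (by nlinarith)]
        ring
end RMKaux3
namespace RMKaux3
section main
variable {X : Type} [MetricSpace X] [MeasurableSpace X] [BorelSpace X]
variable {μ : Measure X} [IsFiniteMeasureOnCompacts μ]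

variable {f : X → ℝ} (hf : Continuous f) (h0 : ∀ x, 0 ≤ f x) (hsupp : HasCompactSupport f)
  {δ : ℝ} (hδ : 0 < δ)

/-- the compact layer sets -/
def layer (f : X → ℝ) (δ : ℝ) (i : ℕ) : Set X := tsupport f ∩ {x | (i:ℝ)*δ ≤ f x}

include hf hsupp in
lemma layer_compact (i : ℕ) : IsCompact (layer f δ i) :=
  hsupp.inter_right (isClosed_le continuous_const hf)

include hf in
lemma layer_closed (i : ℕ) : IsClosed (layer f δ i) :=
  (isClosed_tsupport f).inter (isClosed_le continuous_const hf)

/-- the slice functions -/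
def slice (f : X → ℝ) (δ : ℝ) (i : ℕ) : X → ℝ := fun x => min (max (f x - (i:ℝ)*δ) 0) δ

include hf in
lemma slice_continuous (i : ℕ) : Continuous (slice f δ i) :=
  (((hf.sub continuous_const).max continuous_const).min continuous_const)

include hδ in
lemma slice_nonneg (i : ℕ) (x : X) : 0 ≤ slice f δ i x :=
  le_min (le_max_right _ _) hδ.le

lemma slice_le (i : ℕ) (x : X) : slice f δ i x ≤ δ := min_le_right _ _

include h0 hδ in
lemma slice_indicator_le (i : ℕ) (x : X) :
    (layer f δ (i+1)).indicator (fun _ => δ) x ≤ slice f δ i x ∧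
      slice f δ i x ≤ (layer f δ i).indicator (fun _ => δ) x := by
  constructor
  · by_cases hx : x ∈ layer f δ (i+1)
    · rw [Set.indicator_of_mem hx]
      have h1 : ((i:ℝ)+1)*δ ≤ f x := by exact_mod_cast hx.2
      have : δ ≤ f x - (i:ℝ)*δ := by push_cast at h1 ⊢; linarith
      rw [slice]
      have h2 : δ ≤ max (f x - (i:ℝ)*δ) 0 := this.trans (le_max_left _ _)
      simp only [le_min_iff]
      exact ⟨h2, le_refl _⟩
    · rw [Set.indicator_of_notMem hx]
      exact slice_nonneg hδ i x
  · by_cases hx : x ∈ layer f δ i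
    · rw [Set.indicator_of_mem hx]; exact slice_le i x
    · rw [Set.indicator_of_notMem hx]
      have : slice f δ i x = 0 := by
        rw [slice]
        rcases (not_and_or.1 hx) with h | h
        · -- x not in tsupport f
          have hfx : f x = 0 := image_eq_zero_of_notMem_tsupport h
          have : f x - (i:ℝ)*δ ≤ 0 := by
            rw [hfx]; simp; positivity
          rw [max_eq_right this, min_eq_left hδ.le]
        · have : f x - (i:ℝ)*δ ≤ 0 := by
            simp only [Set.mem_setOf_eq, not_le] at h; linarith
          rw [max_eq_right this, min_eq_left hδ.le]
      rw [this]

include hf h0 hδ in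
lemma slice_support (i : ℕ) : tsupport (slice f δ i) ⊆ layer f δ i := by
  refine closure_minimal ?_ (layer_closed hf i)
  intro x hx
  simp only [Function.mem_support] at hx
  have h1 : 0 < slice f δ i x := lt_of_le_of_ne (slice_nonneg hδ i x) (Ne.symm hx)
  have h2 : 0 < f x - (i:ℝ)*δ := by
    by_contra h
    push_neg at h
    rw [slice, max_eq_right h, min_eq_left hδ.le] at h1
    exact lt_irrefl _ h1
  have h3 : (0:ℝ) ≤ (i:ℝ)*δ := by positivity
  refine ⟨subset_tsupport f (Function.mem_support.2 (ne_of_gt (by linarith))), ?_⟩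
  simp only [Set.mem_setOf_eq]; linarith

include hf h0 hsupp hδ in
lemma slice_hasCompactSupport (i : ℕ) : HasCompactSupport (slice f δ i) :=
  HasCompactSupport.intro (layer_compact hf hsupp i) (fun x hx => by
    by_contra h
    exact hx (slice_support hf h0 hδ i (subset_tsupport _ (Function.mem_support.2 h))))

include hf h0 hsupp hδ in
lemma slice_integrable (i : ℕ) : Integrable (slice f δ i) μ :=
  (slice_continuous hf i).integrable_of_hasCompactSupport
    (slice_hasCompactSupport hf h0 hsupp hδ i)

include hf h0 hsupp hδ in
lemma integral_slice_bounds (i : ℕ) :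
    δ * (μ (layer f δ (i+1))).toReal ≤ ∫ x, slice f δ i x ∂μ ∧
      ∫ x, slice f δ i x ∂μ ≤ δ * (μ (layer f δ i)).toReal := by
  have hint : Integrable (slice f δ i) μ := slice_integrable hf h0 hsupp hδ i
  have hind : ∀ j : ℕ, Integrable ((layer f δ j).indicator (fun _ => δ)) μ := by
    intro j
    rw [integrable_indicator_iff (layer_closed hf j).measurableSet]
    exact integrableOn_const (
      (IsFiniteMeasureOnCompacts.lt_top_of_isCompact (layer_compact hf hsupp j)).ne)
  constructor
  · calc δ * (μ (layer f δ (i+1))).toReal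
        = ∫ x, (layer f δ (i+1)).indicator (fun _ => δ) x ∂μ := by
          rw [integral_indicator_const δ (layer_closed hf (i+1)).measurableSet]
          simp [mul_comm, measureReal_def]
      _ ≤ ∫ x, slice f δ i x ∂μ :=
          integral_mono (hind (i+1)) hint (fun x => (slice_indicator_le h0 hδ i x).1)
  · calc ∫ x, slice f δ i x ∂μ
        ≤ ∫ x, (layer f δ i).indicator (fun _ => δ) x ∂μ :=
          integral_mono hint (hind i) (fun x => (slice_indicator_le h0 hδ i x).2)
      _ = δ * (μ (layer f δ i)).toReal := by
          rw [integral_indicator_const δ (layer_closed hf i).measurableSet]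
          simp [mul_comm, measureReal_def]

end main
end RMKaux3


namespace RMKaux
open RMKaux3
variable {X : Type} [MetricSpace X] [ProperSpace X] [MeasurableSpace X] [BorelSpace X]
variable {lam : (X → ℝ) → ℝ} (hl : IsPosLin lam)
include hl

omit hl in
lemma Cb.finsetSum {ι : Type*} (s : Finset ι) (F : ι → X → ℝ)
    (h : ∀ i ∈ s, Cb (F i)) : Cb (fun x => ∑ i ∈ s, F i x) := by
  classical
  induction s using Finset.cons_induction with
  | empty => simpa using Cb.const (X := X) 0
  | cons a s ha ih =>
    have h1 : Cb (F a) := h a (Finset.mem_cons_self a s)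
    have h2 : Cb (fun x => ∑ i ∈ s, F i x) := ih (fun i hi => h i (Finset.mem_cons_of_mem hi))
    have h3 := h1.add h2
    have : (F a + fun x => ∑ i ∈ s, F i x) = fun x => ∑ i ∈ Finset.cons a s ha, F i x := by
      funext x; rw [Finset.sum_cons]; rfl
    rwa [this] at h3

lemma IsPosLin.finsetSum {ι : Type*} (s : Finset ι) (F : ι → X → ℝ)
    (h : ∀ i ∈ s, Cb (F i)) :
    lam (fun x => ∑ i ∈ s, F i x) = ∑ i ∈ s, lam (F i) := by
  classical
  induction s using Finset.cons_induction with
  | empty => simpa using hl.zero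
  | cons a s ha ih =>
    have hCb : ∀ i ∈ s, Cb (F i) := fun i hi => h i (Finset.mem_cons_of_mem hi)
    have h1 : Cb (F a) := h a (Finset.mem_cons_self a s)
    have h2 : Cb (fun x => ∑ i ∈ s, F i x) := Cb.finsetSum s F hCb
    have h3 : lam (F a + fun x => ∑ i ∈ s, F i x) = lam (F a) + lam (fun x => ∑ i ∈ s, F i x) :=
      hl.add _ _ h1 h2
    have h4 : (F a + fun x => ∑ i ∈ s, F i x) = fun x => ∑ i ∈ Finset.cons a s ha, F i x := by
      funext x; rw [Finset.sum_cons]; rfl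
    rw [← h4, h3, ih hCb, Finset.sum_cons]

/-- Riesz representation for nonnegative compactly supported continuous functions. -/
theorem lam_eq_integral_nonneg {f : X → ℝ} (hf : Continuous f) (h0 : ∀ x, 0 ≤ f x)
    (hsupp : HasCompactSupport f) : lam f = ∫ x, f x ∂(rmkMeasure hl) := by
  haveI := rmkMeasure_finiteOnCompacts hl
  set μ := rmkMeasure hl with hμdef
  obtain ⟨M₀, hM₀⟩ := hf.bounded_above_of_compact_support hsupp
  set M : ℝ := max M₀ 1 with hMdef
  have hM1 : (1:ℝ) ≤ M := le_max_right _ _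
  have hM0 : (0:ℝ) < M := lt_of_lt_of_le one_pos hM1
  have hfM : ∀ x, f x ≤ M := fun x =>
    le_trans (le_trans (le_abs_self _) (hM₀ x)) (le_max_left _ _)
  set c : ℝ := (μ (tsupport f)).toReal with hcdef
  have hc0 : 0 ≤ c := ENNReal.toReal_nonneg
  have key : ∀ N : ℕ, 1 ≤ N → |lam f - ∫ x, f x ∂μ| ≤ M * c / N := by
    intro N hN
    have hNpos : (0:ℝ) < N := by exact_mod_cast hN
    set δ : ℝ := M / N with hδdef
    have hδ : 0 < δ := div_pos hM0 hNpos
    have hNδ : (N:ℝ) * δ = M := by rw [hδdef]; field_simp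
    set G : ℕ → X → ℝ := RMKaux3.slice f δ with hGdef
    have hCb_slice : ∀ i : ℕ, Cb (G i) := fun i =>
      ⟨slice_continuous hf i, δ, fun x => abs_le.2 ⟨by
        have := slice_nonneg (f := f) hδ i x; linarith, slice_le i x⟩⟩
    have hInt : ∀ i : ℕ, Integrable (G i) μ := fun i =>
      slice_integrable hf h0 hsupp hδ i
    have hlayer_ne_top : ∀ i : ℕ, μ (layer f δ i) ≠ ⊤ := fun i =>
      (IsFiniteMeasureOnCompacts.lt_top_of_isCompact (layer_compact hf hsupp i)).ne
    -- decomposition of f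
    have hsum_f : (fun x => ∑ i ∈ Finset.range N, G i x) = f := by
      funext x
      have h1 := sum_slice δ (f x) hδ.le (h0 x) N
      simp only [hGdef, RMKaux3.slice]
      rw [h1, hNδ, min_eq_left (hfM x)]
    have hint_f : ∫ x, f x ∂μ = ∑ i ∈ Finset.range N, ∫ x, G i x ∂μ := by
      rw [← hsum_f]
      exact integral_finset_sum _ (fun i _ => hInt i)
    have hlam_f : lam f = ∑ i ∈ Finset.range N, lam (G i) := by
      rw [← hsum_f]
      exact hl.finsetSum _ _ (fun i _ => hCb_slice i)
    -- bounds on lam of slices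
    have hlam_bounds : ∀ i : ℕ,
        δ * (μ (layer f δ (i+1))).toReal ≤ lam (G i) ∧
          lam (G i) ≤ δ * (μ (layer f δ i)).toReal := by
      intro i
      have hg : Cb (δ⁻¹ • G i) := (hCb_slice i).smul _
      have hg0 : ∀ x, 0 ≤ (δ⁻¹ • G i) x := fun x => by
        simp only [Pi.smul_apply, smul_eq_mul]
        exact mul_nonneg (by positivity) (slice_nonneg hδ i x)
      have hg1 : ∀ x, (δ⁻¹ • G i) x ≤ 1 := fun x => by
        simp only [Pi.smul_apply, smul_eq_mul]
        calc δ⁻¹ * G i x ≤ δ⁻¹ * δ :=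
              mul_le_mul_of_nonneg_left (slice_le i x) (by positivity)
          _ = 1 := inv_mul_cancel₀ hδ.ne'
      have hlamg : lam (δ⁻¹ • G i) = δ⁻¹ * lam (G i) :=
        hl.smul _ _ (hCb_slice i)
      have hlam_nonneg : 0 ≤ lam (G i) := hl.pos _ (hCb_slice i) (slice_nonneg hδ i)
      constructor
      · -- lower bound
        have htest : (δ⁻¹ • G i) ∈ testFns (layer f δ (i+1)) := by
          refine ⟨hg, hg0, fun x hx => ?_⟩
          have h1 := (slice_indicator_le h0 hδ i x).1
          rw [Set.indicator_of_mem hx] at h1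
          have h2 : G i x = δ := le_antisymm (slice_le i x) h1
          simp only [Pi.smul_apply, smul_eq_mul, h2, inv_mul_cancel₀ hδ.ne', le_refl]
        have hb := rmkMeasure_le_lam hl (layer_compact hf hsupp (i+1)) htest
        rw [← hμdef] at hb
        have h3 := ENNReal.toReal_mono ENNReal.ofReal_ne_top hb
        rw [ENNReal.toReal_ofReal (by rw [hlamg]; positivity)] at h3
        rw [hlamg] at h3
        calc δ * (μ (layer f δ (i+1))).toReal ≤ δ * (δ⁻¹ * lam (G i)) :=
              mul_le_mul_of_nonneg_left h3 hδ.le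
          _ = lam (G i) := by field_simp
      · -- upper bound
        have hsupp_sub : Function.support (δ⁻¹ • G i) ⊆
            Function.support (G i) := fun x hx => by
          simp only [Function.mem_support, Pi.smul_apply, smul_eq_mul] at hx ⊢
          exact fun h => hx (by rw [h, mul_zero])
        have h1 : tsupport (δ⁻¹ • G i) ⊆ layer f δ i :=
          (closure_mono hsupp_sub).trans (slice_support hf h0 hδ i)
        have hcs : HasCompactSupport (δ⁻¹ • G i) :=
          IsCompact.of_isClosed_subset (layer_compact hf hsupp i) (isClosed_tsupport _) h1
        have h2 := lam_le_measure hl hg hg0 hg1 hcs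
        rw [← hμdef] at h2
        have h3 : (μ (tsupport (δ⁻¹ • G i))).toReal ≤ (μ (layer f δ i)).toReal :=
          ENNReal.toReal_mono (hlayer_ne_top i) (measure_mono h1)
        have h4 : δ⁻¹ * lam (G i) ≤ (μ (layer f δ i)).toReal := by
          rw [← hlamg]; exact h2.trans h3
        calc lam (G i) = δ * (δ⁻¹ * lam (G i)) := by field_simp
          _ ≤ δ * (μ (layer f δ i)).toReal := mul_le_mul_of_nonneg_left h4 hδ.le
    -- combine
    have hboth : ∀ i ∈ Finset.range N,
        |lam (G i) - ∫ x, G i x ∂μ| ≤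
          δ * (μ (layer f δ i)).toReal - δ * (μ (layer f δ (i+1))).toReal := by
      intro i _
      have h1 := hlam_bounds i
      have h2 := integral_slice_bounds (μ := μ) hf h0 hsupp hδ i
      rw [abs_le]
      constructor
      · linarith [h2.2, h1.1]
      · linarith [h2.1, h1.2]
    have htele : ∑ i ∈ Finset.range N,
        (δ * (μ (layer f δ i)).toReal - δ * (μ (layer f δ (i+1))).toReal) =
          δ * (μ (layer f δ 0)).toReal - δ * (μ (layer f δ N)).toReal :=
      Finset.sum_range_sub' (fun i => δ * (μ (layer f δ i)).toReal) N
    have hlayer0 : (μ (layer f δ 0)).toReal ≤ c := by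
      rw [hcdef]
      exact ENNReal.toReal_mono (rmkMeasure_compact_ne_top hl hsupp)
        (measure_mono Set.inter_subset_left)
    calc |lam f - ∫ x, f x ∂μ|
        = |∑ i ∈ Finset.range N, (lam (G i) - ∫ x, G i x ∂μ)| := by
          rw [hlam_f, hint_f, Finset.sum_sub_distrib]
      _ ≤ ∑ i ∈ Finset.range N, |lam (G i) - ∫ x, G i x ∂μ| :=
          Finset.abs_sum_le_sum_abs _ _
      _ ≤ ∑ i ∈ Finset.range N,
            (δ * (μ (layer f δ i)).toReal - δ * (μ (layer f δ (i+1))).toReal) :=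
          Finset.sum_le_sum hboth
      _ = δ * (μ (layer f δ 0)).toReal - δ * (μ (layer f δ N)).toReal := htele
      _ ≤ δ * (μ (layer f δ 0)).toReal := by
          have : 0 ≤ δ * (μ (layer f δ N)).toReal :=
            mul_nonneg hδ.le ENNReal.toReal_nonneg
          linarith
      _ ≤ δ * c := mul_le_mul_of_nonneg_left hlayer0 hδ.le
      _ = M * c / N := by rw [hδdef]; ring
  -- conclude
  by_contra hne
  have habs : 0 < |lam f - ∫ x, f x ∂μ| := abs_pos.2 (sub_ne_zero.2 hne)
  obtain ⟨n, hn⟩ := exists_nat_gt (M * c / |lam f - ∫ x, f x ∂μ|)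
  have hN1 : 1 ≤ n + 1 := Nat.le_add_left 1 n
  have h2 := key (n+1) hN1
  have hNpos : (0:ℝ) < (n:ℝ) + 1 := by positivity
  have hlt : M * c / |lam f - ∫ x, f x ∂μ| < (n:ℝ) + 1 := by
    calc M * c / |lam f - ∫ x, f x ∂μ| < n := hn
      _ < (n:ℝ) + 1 := by linarith
  have hmc : M * c < ((n:ℝ) + 1) * |lam f - ∫ x, f x ∂μ| := by
    rw [div_lt_iff₀ habs] at hlt
    linarith
  have h3 : |lam f - ∫ x, f x ∂μ| ≤ M * c / ((n:ℝ)+1) := by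
    have := h2
    push_cast at this
    exact this
  have h4 : M * c / ((n:ℝ)+1) < |lam f - ∫ x, f x ∂μ| := (div_lt_iff₀ hNpos).2 (by linarith)
  linarith

/-- Riesz representation for compactly supported continuous functions. -/
theorem lam_eq_integral {f : X → ℝ} (hf : Continuous f) (hsupp : HasCompactSupport f) :
    lam f = ∫ x, f x ∂(rmkMeasure hl) := by
  haveI := rmkMeasure_finiteOnCompacts hl
  set μ := rmkMeasure hl with hμdef
  set fp : X → ℝ := fun x => max (f x) 0 with hfp
  set fm : X → ℝ := fun x => max (-f x) 0 with hfm
  have hfpc : Continuous fp := hf.max continuous_const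
  have hfmc : Continuous fm := hf.neg.max continuous_const
  have hsub : ∀ (g : X → ℝ), (∀ x, f x = 0 → g x = 0) → tsupport g ⊆ tsupport f := by
    intro g hg
    refine closure_mono (fun x hx => ?_)
    simp only [Function.mem_support] at hx ⊢
    exact fun h => hx (hg x h)
  have hfpsupp : HasCompactSupport fp :=
    IsCompact.of_isClosed_subset hsupp (isClosed_tsupport _)
      (hsub fp (fun x hx => by simp [hfp, hx]))
  have hfmsupp : HasCompactSupport fm :=
    IsCompact.of_isClosed_subset hsupp (isClosed_tsupport _)
      (hsub fm (fun x hx => by simp [hfm, hx]))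
  have hCbf : Cb f := by
    obtain ⟨M₀, hM₀⟩ := hf.bounded_above_of_compact_support hsupp
    exact ⟨hf, M₀, hM₀⟩
  have hCbfp : Cb fp := ⟨hfpc, by
    obtain ⟨M₀, hM₀⟩ := hCbf.2
    exact ⟨max M₀ 0, fun x => by
      show |max (f x) 0| ≤ max M₀ 0
      rw [abs_of_nonneg (le_max_right _ _)]
      rcases le_or_gt (f x) 0 with h | h
      · rw [max_eq_right h]; exact le_max_right _ _
      · rw [max_eq_left h.le]
        exact le_trans (le_trans (le_abs_self _) (hM₀ x)) (le_max_left _ _)⟩⟩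
  have hCbfm : Cb fm := ⟨hfmc, by
    obtain ⟨M₀, hM₀⟩ := hCbf.2
    exact ⟨max M₀ 0, fun x => by
      show |max (-f x) 0| ≤ max M₀ 0
      rw [abs_of_nonneg (le_max_right _ _)]
      rcases le_or_gt (-f x) 0 with h | h
      · rw [max_eq_right h]; exact le_max_right _ _
      · rw [max_eq_left h.le]
        exact le_trans (le_trans (le_abs_self _) ((abs_neg (f x)) ▸ hM₀ x)) (le_max_left _ _)⟩⟩
  have hdecomp : f = fp + (-1 : ℝ) • fm := by
    funext x
    simp only [Pi.add_apply, Pi.smul_apply, smul_eq_mul, hfp, hfm]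
    rcases le_or_gt (f x) 0 with h | h
    · rw [max_eq_right h, max_eq_left (by linarith)]; ring
    · rw [max_eq_left h.le, max_eq_right (by linarith)]; ring
  have h1 : lam f = lam fp - lam fm := by
    rw [hdecomp, hl.add _ _ hCbfp (hCbfm.smul _), hl.smul _ _ hCbfm]
    ring
  have h2 : ∫ x, f x ∂μ = ∫ x, fp x ∂μ - ∫ x, fm x ∂μ := by
    rw [← integral_sub (hfpc.integrable_of_hasCompactSupport hfpsupp)
      (hfmc.integrable_of_hasCompactSupport hfmsupp)]
    congr 1
    funext x
    show f x = max (f x) 0 - max (-f x) 0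
    rcases le_or_gt (f x) 0 with h | h
    · rw [max_eq_right h, max_eq_left (by linarith)]; ring
    · rw [max_eq_left h.le, max_eq_right (by linarith)]; ring
  rw [h1, h2, lam_eq_integral_nonneg hl hfpc (fun x => le_max_right _ _) hfpsupp,
    lam_eq_integral_nonneg hl hfmc (fun x => le_max_right _ _) hfmsupp]

end RMKaux



namespace RMKaux
section Cutoff
variable {X : Type} [MetricSpace X]

/-- A Lipschitz cutoff function: `1` on `closedBall x₀ m`, supported in `closedBall x₀ (m+1)`. -/
def cutoff (x₀ : X) (m : ℝ) : X → ℝ := fun x => max 0 (min 1 (m + 1 - dist x x₀))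

lemma cutoff_continuous' (x₀ : X) (m : ℝ) : Continuous (cutoff x₀ m) := by
  unfold cutoff
  exact continuous_const.max (continuous_const.min
    (continuous_const.sub (continuous_id.dist continuous_const)))

lemma cutoff_nonneg (x₀ : X) (m : ℝ) (x : X) : 0 ≤ cutoff x₀ m x := le_max_left _ _

lemma cutoff_le_one (x₀ : X) (m : ℝ) (x : X) : cutoff x₀ m x ≤ 1 :=
  max_le zero_le_one (min_le_left _ _)

lemma cutoff_eq_one (x₀ : X) (m : ℝ) (x : X) (h : dist x x₀ ≤ m) : cutoff x₀ m x = 1 := by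
  unfold cutoff
  rw [min_eq_left (by linarith), max_eq_right zero_le_one]

lemma cutoff_mono (x₀ : X) {m m' : ℝ} (h : m ≤ m') (x : X) :
    cutoff x₀ m x ≤ cutoff x₀ m' x := by
  unfold cutoff
  exact max_le_max (le_refl _) (min_le_min (le_refl _) (by linarith))

lemma cutoff_support (x₀ : X) (m : ℝ) :
    Function.support (cutoff x₀ m) ⊆ Metric.closedBall x₀ (m+1) := by
  intro x hx
  rw [Function.mem_support] at hx
  rw [Metric.mem_closedBall]
  by_contra h
  push_neg at h
  apply hx
  unfold cutoff
  rw [min_eq_right (by linarith), max_eq_left (by linarith)]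

lemma cutoff_Cb (x₀ : X) (m : ℝ) : Cb (cutoff x₀ m) :=
  ⟨cutoff_continuous' x₀ m, 1, fun x =>
    abs_le.2 ⟨by linarith [cutoff_nonneg x₀ m x], cutoff_le_one x₀ m x⟩⟩

lemma cutoff_hasCompactSupport [ProperSpace X] (x₀ : X) (m : ℝ) :
    HasCompactSupport (cutoff x₀ m) :=
  HasCompactSupport.of_support_subset_isCompact (isCompact_closedBall x₀ (m+1))
    (cutoff_support x₀ m)

end Cutoff

section KeyBound
variable {X : Type} [MetricSpace X] [ProperSpace X] [MeasurableSpace X] [BorelSpace X]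
variable {lam : (X → ℝ) → ℝ} (hl : IsPosLin lam)

include hl in
lemma lintegral_le_lam (x₀ : X) {g : X → ℝ} (hgc : Continuous g) (hg0 : ∀ x, 0 ≤ g x)
    (hmono : ∀ h : X → ℝ, Cb h → (∀ x, 0 ≤ h x) → (∀ x, h x ≤ g x) → lam h ≤ lam g) :
    ∫⁻ x, ENNReal.ofReal (g x) ∂(rmkMeasure hl) ≤ ENNReal.ofReal (lam g) := by
  haveI := rmkMeasure_finiteOnCompacts hl
  set G : ℕ → X → ℝ := fun m x => min (g x) m * cutoff x₀ m x with hGdef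
  have hGcont : ∀ m, Continuous (G m) :=
    fun m => (hgc.min continuous_const).mul (cutoff_continuous' x₀ m)
  have hG0 : ∀ m x, 0 ≤ G m x := fun m x =>
    mul_nonneg (le_min (hg0 x) (Nat.cast_nonneg m)) (cutoff_nonneg _ _ _)
  have hGle : ∀ m x, G m x ≤ g x := fun m x => by
    calc G m x ≤ min (g x) m * 1 :=
          mul_le_mul_of_nonneg_left (cutoff_le_one _ _ _) (le_min (hg0 x) (Nat.cast_nonneg m))
      _ = min (g x) m := mul_one _
      _ ≤ g x := min_le_left _ _
  have hGCb : ∀ m, Cb (G m) := fun m =>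
    ⟨hGcont m, m, fun x => abs_le.2 ⟨by linarith [hG0 m x],
      calc G m x ≤ min (g x) m * 1 :=
            mul_le_mul_of_nonneg_left (cutoff_le_one _ _ _) (le_min (hg0 x) (Nat.cast_nonneg m))
        _ = min (g x) m := mul_one _
        _ ≤ m := min_le_right _ _⟩⟩
  have hGsupp : ∀ m, HasCompactSupport (G m) := fun m => by
    refine HasCompactSupport.of_support_subset_isCompact
      (isCompact_closedBall x₀ ((m:ℝ)+1)) ?_
    intro x hx
    rw [Function.mem_support] at hx
    have : cutoff x₀ m x ≠ 0 := fun h => hx (by rw [hGdef]; simp [h])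
    exact cutoff_support x₀ m (Function.mem_support.2 this)
  have hGmono : ∀ x, Monotone (fun m : ℕ => ENNReal.ofReal (G m x)) := by
    intro x
    refine monotone_nat_of_le_succ (fun m => ENNReal.ofReal_le_ofReal ?_)
    have h1 : min (g x) (m:ℝ) ≤ min (g x) ((m:ℝ)+1) := min_le_min (le_refl _) (by linarith)
    have h2 : cutoff x₀ (m:ℝ) x ≤ cutoff x₀ ((m:ℝ)+1) x := cutoff_mono x₀ (by linarith) x
    have h3 : G (m+1) x = min (g x) ((m:ℝ)+1) * cutoff x₀ ((m:ℝ)+1) x := by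
      rw [hGdef]; push_cast; ring_nf
    rw [h3]
    exact mul_le_mul h1 h2 (cutoff_nonneg _ _ _) (le_min (hg0 x) (by positivity))
  have hGsup : ∀ x, (⨆ m : ℕ, ENNReal.ofReal (G m x)) = ENNReal.ofReal (g x) := by
    intro x
    refine le_antisymm (iSup_le fun m => ENNReal.ofReal_le_ofReal (hGle m x)) ?_
    obtain ⟨m, hm⟩ := exists_nat_ge (max (g x) (dist x x₀))
    have h1 : g x ≤ m := (le_max_left _ _).trans hm
    have h2 : dist x x₀ ≤ m := (le_max_right _ _).trans hm
    have h3 : G m x = g x := by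
      rw [hGdef]
      simp only []
      rw [min_eq_left h1, cutoff_eq_one x₀ m x h2, mul_one]
    exact le_iSup_of_le m (le_of_eq (by rw [h3]))
  have hmain : ∫⁻ x, ENNReal.ofReal (g x) ∂(rmkMeasure hl)
      = ⨆ m, ∫⁻ x, ENNReal.ofReal (G m x) ∂(rmkMeasure hl) := by
    rw [← lintegral_iSup' (fun m => ((hGcont m).measurable.ennreal_ofReal).aemeasurable)
      (Filter.Eventually.of_forall hGmono)]
    refine lintegral_congr (fun x => ?_)
    exact (hGsup x).symm
  rw [hmain]
  refine iSup_le (fun m => ?_)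
  have hInt : Integrable (G m) (rmkMeasure hl) :=
    (hGcont m).integrable_of_hasCompactSupport (hGsupp m)
  have h1 : ∫⁻ x, ENNReal.ofReal (G m x) ∂(rmkMeasure hl)
      = ENNReal.ofReal (∫ x, G m x ∂(rmkMeasure hl)) :=
    (ofReal_integral_eq_lintegral_ofReal hInt
      (Filter.Eventually.of_forall (hG0 m))).symm
  rw [h1, ← lam_eq_integral hl (hGcont m) (hGsupp m)]
  exact ENNReal.ofReal_le_ofReal (hmono (G m) (hGCb m) (hG0 m) (hGle m))

end KeyBound
end RMKaux

/-! ### Glue lemmas for the EMOT setting -/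

namespace EMOTAux
open RMKaux
variable {T d : ℕ} {K : Fin (T + 1) → Fin d → Set ℝ}

lemma wt_nonneg (x : EMOT.PathSpace K) : 0 ≤ EMOT.wt K x :=
  Finset.sum_nonneg fun t _ => Finset.sum_nonneg fun j _ => abs_nonneg _

lemma coord_continuous (t : Fin (T+1)) (j : Fin d) :
    Continuous (fun x : EMOT.PathSpace K => x.1 t j) :=
  (continuous_apply j).comp ((continuous_apply t).comp continuous_subtype_val)

lemma wt_continuous : Continuous (EMOT.wt K) := by
  unfold EMOT.wt
  exact continuous_finset_sum _ fun t _ => continuous_finset_sum _ fun j _ =>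
    (coord_continuous t j).abs

lemma memC_of_Cb {f : EMOT.PathSpace K → ℝ} (hf : Cb f) : EMOT.memC K f := by
  obtain ⟨hc, M, hM⟩ := hf
  refine ⟨hc, max M 0, fun x => ?_⟩
  have h1 : (1:ℝ) ≤ 1 + EMOT.wt K x := by linarith [wt_nonneg x]
  calc |f x| ≤ M := hM x
    _ ≤ max M 0 := le_max_left _ _
    _ = max M 0 * 1 := by ring
    _ ≤ max M 0 * (1 + EMOT.wt K x) :=
      mul_le_mul_of_nonneg_left h1 (le_max_right _ _)

lemma memC_const (r : ℝ) : EMOT.memC K (fun _ => r) := memC_of_Cb (Cb.const r)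

lemma memC_add {f g : EMOT.PathSpace K → ℝ} (hf : EMOT.memC K f) (hg : EMOT.memC K g) :
    EMOT.memC K (f + g) := by
  obtain ⟨hc1, M1, hM1⟩ := hf; obtain ⟨hc2, M2, hM2⟩ := hg
  refine ⟨hc1.add hc2, M1 + M2, fun x => ?_⟩
  have h1 : (0:ℝ) ≤ 1 + EMOT.wt K x := by linarith [wt_nonneg x]
  calc |(f + g) x| ≤ |f x| + |g x| := abs_add_le _ _
    _ ≤ M1 * (1 + EMOT.wt K x) + M2 * (1 + EMOT.wt K x) := add_le_add (hM1 x) (hM2 x)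
    _ = (M1 + M2) * (1 + EMOT.wt K x) := by ring

lemma memC_smul (r : ℝ) {f : EMOT.PathSpace K → ℝ} (hf : EMOT.memC K f) :
    EMOT.memC K (r • f) := by
  obtain ⟨hc, M, hM⟩ := hf
  refine ⟨hc.const_smul r, |r| * M, fun x => ?_⟩
  simp only [Pi.smul_apply, smul_eq_mul, abs_mul]
  calc |r| * |f x| ≤ |r| * (M * (1 + EMOT.wt K x)) :=
        mul_le_mul_of_nonneg_left (hM x) (abs_nonneg r)
    _ = |r| * M * (1 + EMOT.wt K x) := by ring

lemma memC_sub {f g : EMOT.PathSpace K → ℝ} (hf : EMOT.memC K f) (hg : EMOT.memC K g) :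
    EMOT.memC K (f - g) := by
  have h : f - g = f + (-1 : ℝ) • g := by funext x; simp; ring
  rw [h]; exact memC_add hf (memC_smul _ hg)

lemma memC_mul_Cb {f g : EMOT.PathSpace K → ℝ} (hf : EMOT.memC K f) (hg : Cb g) :
    EMOT.memC K (f * g) := by
  obtain ⟨hc1, M1, hM1⟩ := hf; obtain ⟨hc2, M2, hM2⟩ := hg
  refine ⟨hc1.mul hc2, M1 * M2 + M1, fun x => ?_⟩
  have h1 : (0:ℝ) ≤ 1 + EMOT.wt K x := by linarith [wt_nonneg x]
  have h2 : 0 ≤ |f x| := abs_nonneg _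
  have h4 : |f x| ≤ M1 * (1 + EMOT.wt K x) := hM1 x
  have h5 : |g x| ≤ M2 := hM2 x
  have h6 : 0 ≤ |g x| := abs_nonneg _
  calc |(f * g) x| = |f x| * |g x| := by rw [Pi.mul_apply, abs_mul]
    _ ≤ (M1 * (1 + EMOT.wt K x)) * M2 := mul_le_mul h4 h5 h6 (le_trans h2 h4)
    _ = M1 * M2 * (1 + EMOT.wt K x) := by ring
    _ ≤ (M1 * M2 + M1) * (1 + EMOT.wt K x) := by nlinarith [h1, le_trans h2 h4]

lemma memC_wt : EMOT.memC K (EMOT.wt K) :=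
  ⟨wt_continuous, 1, fun x => by
    rw [abs_of_nonneg (wt_nonneg x)]; linarith [wt_nonneg x]⟩

lemma memC_sum {ι : Type*} (s : Finset ι) (F : ι → EMOT.PathSpace K → ℝ)
    (h : ∀ i ∈ s, EMOT.memC K (F i)) : EMOT.memC K (fun x => ∑ i ∈ s, F i x) := by
  classical
  induction s using Finset.cons_induction with
  | empty => simpa using memC_const (K := K) 0
  | cons a s ha ih =>
    have h1 := memC_add (h a (Finset.mem_cons_self a s))
      (ih (fun i hi => h i (Finset.mem_cons_of_mem hi)))
    have h2 : (F a + fun x => ∑ i ∈ s, F i x) = fun x => ∑ i ∈ Finset.cons a s ha, F i x := by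
      funext x; rw [Finset.sum_cons]; rfl
    rwa [h2] at h1

lemma memC_of_memCto {t : Fin (T+1)} {f : EMOT.PathSpace K → ℝ}
    (hf : EMOT.memCto K t f) : EMOT.memC K f := by
  obtain ⟨hc, ⟨M, hM⟩, _⟩ := hf
  refine ⟨hc, max M 0, fun x => ?_⟩
  have hwt : EMOT.wtTo K t x ≤ EMOT.wt K x := by
    unfold EMOT.wtTo EMOT.wt
    exact Finset.sum_le_sum_of_subset_of_nonneg (Finset.filter_subset _ _)
      (fun s _ _ => Finset.sum_nonneg fun j _ => abs_nonneg _)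
  have h1 : (0:ℝ) ≤ 1 + EMOT.wtTo K t x := by
    have : 0 ≤ EMOT.wtTo K t x :=
      Finset.sum_nonneg fun s _ => Finset.sum_nonneg fun j _ => abs_nonneg _
    linarith
  calc |f x| ≤ M * (1 + EMOT.wtTo K t x) := hM x
    _ ≤ max M 0 * (1 + EMOT.wtTo K t x) :=
      mul_le_mul_of_nonneg_right (le_max_left _ _) h1
    _ ≤ max M 0 * (1 + EMOT.wt K x) :=
      mul_le_mul_of_nonneg_left (by linarith) (le_max_right _ _)

section lam
variable (lam : (EMOT.PathSpace K → ℝ) → ℝ)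
  (hlin : EMOT.IsLinC K lam) (hpos : EMOT.IsPos K lam)

include hlin hpos in
lemma lam_mono_memC {f g : EMOT.PathSpace K → ℝ} (hf : EMOT.memC K f) (hg : EMOT.memC K g)
    (h : ∀ x, f x ≤ g x) : lam f ≤ lam g := by
  have hfg : EMOT.memC K (g - f) := memC_sub hg hf
  have hp : 0 ≤ lam (g - f) := hpos _ hfg (fun x => by simp [h x])
  have ha : lam (f + (g - f)) = lam f + lam (g - f) := hlin.1 _ _ hf hfg
  have h2 : f + (g - f) = g := by funext x; simp
  rw [h2] at ha
  linarith

include hlin in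
lemma lam_zero : lam (fun _ => 0) = 0 := by
  have h := hlin.2.1 0 (fun _ => 0) (memC_const 0)
  have h2 : (0:ℝ) • (fun _ : EMOT.PathSpace K => (0:ℝ)) = fun _ => (0:ℝ) := by
    funext x; simp
  rw [h2] at h; simpa using h

include hlin in
lemma lam_sum_memC {ι : Type*} (s : Finset ι) (F : ι → EMOT.PathSpace K → ℝ)
    (h : ∀ i ∈ s, EMOT.memC K (F i)) :
    lam (fun x => ∑ i ∈ s, F i x) = ∑ i ∈ s, lam (F i) := by
  classical
  induction s using Finset.cons_induction with
  | empty => simpa using lam_zero lam hlin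
  | cons a s ha ih =>
    have hCb : ∀ i ∈ s, EMOT.memC K (F i) := fun i hi => h i (Finset.mem_cons_of_mem hi)
    have h1 : EMOT.memC K (F a) := h a (Finset.mem_cons_self a s)
    have h2 : EMOT.memC K (fun x => ∑ i ∈ s, F i x) := memC_sum s F hCb
    have h3 : lam (F a + fun x => ∑ i ∈ s, F i x)
        = lam (F a) + lam (fun x => ∑ i ∈ s, F i x) := hlin.1 _ _ h1 h2
    have h4 : (F a + fun x => ∑ i ∈ s, F i x) = fun x => ∑ i ∈ Finset.cons a s ha, F i x := by
      funext x; rw [Finset.sum_cons]; rfl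
    rw [← h4, h3, ih hCb, Finset.sum_cons]

end lam
end EMOTAux

namespace EMOT


/-- Lemma `proprepreconintegralsc`: if `P(ĉ) < +∞` for some
`ĉ ∈ B_{0:T}` and `λ ∈ (C_{0:T})*` is positive with `λ(1) = 1` and finite penalization
`D(λ_0,…,λ_T)`, then `λ` is represented by a unique `Q ∈ Prob¹(Ω)`. -/
theorem dual_element_is_represented_by_probability
    {T d : ℕ} (hT : 1 ≤ T) (hd : 1 ≤ d)
    (K : Fin (T + 1) → Fin d → Set ℝ)
    (E : Fin (T + 1) → Set (PathSpace K → ℝ))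
    (U : (Fin (T + 1) → PathSpace K → ℝ) → EReal)
    (A : Set (PathSpace K → ℝ))
    (hS : IsSetting K E U A) (hG : Growth K E U)
    (chat : PathSpace K → ℝ) (hchat : memB K chat)
    (hfin : PB K E U A chat ≠ ⊤)
    (lam : (PathSpace K → ℝ) → ℝ)
    (hlin : IsLinC K lam) (hpos : IsPos K lam)
    (hone : lam (fun _ => 1) = 1)
    (hD : Dlam K E U lam ≠ ⊤) :
    ∃! Q : Measure (PathSpace K),
      Prob1 K Q ∧ ∀ φ, memC K φ → lam φ = ∫ x, φ x ∂Q := by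
  classical
  obtain ⟨𝒦, fG, h𝒦cpt, hfE, hf0, hfdom, hftend⟩ := hG
  haveI hXne : Nonempty (PathSpace K) :=
    ⟨⟨fun t j => (hS.K_nonempty t j).choose, fun t j => (hS.K_nonempty t j).choose_spec⟩⟩
  have hXc : IsClosed {x : Fin (T + 1) → Fin d → ℝ | ∀ t j, x t j ∈ K t j} := by
    have h : {x : Fin (T + 1) → Fin d → ℝ | ∀ t j, x t j ∈ K t j} =
        ⋂ t, ⋂ j, (fun x : Fin (T+1) → Fin d → ℝ => x t j) ⁻¹' (K t j) := by
      ext x; simp [Set.mem_iInter]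
    rw [h]
    exact isClosed_iInter fun t => isClosed_iInter fun j =>
      (hS.K_closed t j).preimage ((continuous_apply j).comp (continuous_apply t))
  haveI hProper : ProperSpace (PathSpace K) := by
    refine ProperSpace.of_isCompact_closedBall_of_le 0 (fun x r _ => ?_)
    rw [Subtype.isCompact_iff]
    have hcpt : IsCompact (Metric.closedBall (x : Fin (T+1) → Fin d → ℝ) r ∩
        {x : Fin (T + 1) → Fin d → ℝ | ∀ t j, x t j ∈ K t j}) :=
      (isCompact_closedBall _ _).inter_right hXc
    convert hcpt using 1
    · rfl
    ext y
    constructor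
    · rintro ⟨z, hz, rfl⟩
      refine ⟨?_, z.2⟩
      have hz' : dist z x ≤ r := hz
      rw [Subtype.dist_eq] at hz'
      exact hz'
    · rintro ⟨hy1, hy2⟩
      refine ⟨⟨y, hy2⟩, ?_, rfl⟩
      show dist (⟨y, hy2⟩ : PathSpace K) x ≤ r
      rw [Subtype.dist_eq]
      exact hy1
  haveI hBorel : BorelSpace (PathSpace K) :=
    Subtype.borelSpace {x : Fin (T + 1) → Fin d → ℝ | ∀ t j, x t j ∈ K t j}
  have x₀ : PathSpace K := Classical.arbitrary _
  -- the positive linear functional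
  have hl : RMKaux.IsPosLin lam :=
    ⟨fun f g hf hg => hlin.1 f g (EMOTAux.memC_of_Cb hf) (EMOTAux.memC_of_Cb hg),
     fun r f hf => hlin.2.1 r f (EMOTAux.memC_of_Cb hf),
     fun f hf h0 => hpos f (EMOTAux.memC_of_Cb hf) h0⟩
  set μ := RMKaux.rmkMeasure hl with hμdef
  haveI hFinC : IsFiniteMeasureOnCompacts μ := RMKaux.rmkMeasure_finiteOnCompacts hl
  -- the tightness family
  set F : ℕ → PathSpace K → ℝ := fun n x => ∑ t, fG n t x with hFdef
  have hfmemC : ∀ n t, memC K (fG n t) := fun n t =>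
    EMOTAux.memC_of_memCto (hS.E_subset t _ (hfE n t))
  have hFmemC : ∀ n, memC K (F n) := fun n => EMOTAux.memC_sum _ _ (fun t _ => hfmemC n t)
  have hF0 : ∀ n x, 0 ≤ F n x := fun n x => Finset.sum_nonneg fun t _ => hf0 n t x
  have hlamF0 : ∀ n, 0 ≤ lam (F n) := fun n => hpos _ (hFmemC n) (hF0 n)
  -- tightness from finiteness of the penalization
  have htight : ∀ ε : ℝ, 0 < ε → ∃ n, lam (F n) ≤ ε := by
    intro ε hε
    have hDbot : Dlam K E U lam ≠ ⊥ := by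
      intro hbot
      have hmem0 : memE K E (fun _ _ => (0:ℝ)) := fun t => hS.E_const t 0
      have hterm := le_iSup₂ (f := fun φ (_ : memE K E φ) =>
        U φ - ((∑ t, lam (φ t) : ℝ) : EReal)) (fun _ _ => (0:ℝ)) hmem0
      rw [Dlam] at hbot
      rw [hbot] at hterm
      have hsum0 : (∑ t : Fin (T+1), lam ((fun (_ : Fin (T+1)) (_ : PathSpace K) => (0:ℝ)) t)) = 0 := by
        simp [EMOTAux.lam_zero lam hlin]
      rw [hsum0] at hterm
      simp only [EReal.coe_zero, sub_zero, le_bot_iff] at hterm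
      exact hS.U_zero_real hterm
    set D₀ : ℝ := (Dlam K E U lam).toReal with hD₀
    have hDeq : Dlam K E U lam = (D₀ : EReal) := (EReal.coe_toReal hD hDbot).symm
    set Γ : ℝ := max 1 (2 * (|D₀| + 1) / ε) with hΓ
    have hΓpos : 0 < Γ := lt_of_lt_of_le one_pos (le_max_left _ _)
    have hΓD : |D₀| / Γ ≤ ε / 2 := by
      have h2 : 2 * (|D₀| + 1) / ε ≤ Γ := le_max_right _ _
      rw [div_le_iff₀ hΓpos]
      rw [div_le_iff₀ hε] at h2
      nlinarith [abs_nonneg D₀]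
    have hev := (hftend Γ hΓpos).eventually_lt_const
      (show (0:EReal) < ((Γ * ε / 2 : ℝ) : EReal) by exact_mod_cast (by positivity : (0:ℝ) < Γ * ε / 2))
    obtain ⟨n, hn⟩ := hev.exists
    refine ⟨n, ?_⟩
    set φ' : Fin (T+1) → PathSpace K → ℝ := fun t x => -(Γ * fG n t x) with hφ'
    have hmem' : memE K E φ' := by
      intro t
      have h1 := hS.E_smul t (-Γ) _ (hfE n t)
      have h2 : (-Γ) • fG n t = φ' t := by funext x; simp only [hφ', Pi.smul_apply, smul_eq_mul]; ring
      rwa [h2] at h1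
    have hUneTop : U φ' ≠ ⊤ := hS.U_ne_top φ' hmem'
    have hun : -U φ' < ((Γ * ε / 2 : ℝ) : EReal) := hn
    have hUnbot : U φ' ≠ ⊥ := by
      intro hb; rw [hb] at hun; simp at hun
    set u : ℝ := (U φ').toReal with hu
    have hUeq : U φ' = (u : EReal) := (EReal.coe_toReal hUneTop hUnbot).symm
    have huineq : -u < Γ * ε / 2 := by
      rw [hUeq, ← EReal.coe_neg] at hun
      exact_mod_cast hun
    have hterm := le_iSup₂ (f := fun φ (_ : memE K E φ) =>
      U φ - ((∑ t, lam (φ t) : ℝ) : EReal)) φ' hmem'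
    rw [show (⨆ φ, ⨆ (_ : memE K E φ), (U φ - ((∑ t, lam (φ t) : ℝ) : EReal))) = Dlam K E U lam from rfl] at hterm
    have hsumφ : (∑ t, lam (φ' t) : ℝ) = -Γ * lam (F n) := by
      have h1 : ∀ t, lam (φ' t) = -Γ * lam (fG n t) := fun t => by
        have h2 : φ' t = (-Γ) • fG n t := by funext x; simp only [hφ', Pi.smul_apply, smul_eq_mul]; ring
        rw [h2, hlin.2.1 (-Γ) _ (hfmemC n t)]
      rw [Finset.sum_congr rfl (fun t _ => h1 t), ← Finset.mul_sum]
      congr 1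
      exact (EMOTAux.lam_sum_memC lam hlin Finset.univ _ (fun t _ => hfmemC n t)).symm
    rw [hUeq, hsumφ, hDeq] at hterm
    rw [← EReal.coe_sub] at hterm
    have hreal : u - (-Γ * lam (F n)) ≤ D₀ := EReal.coe_le_coe_iff.1 hterm
    have hΓL : Γ * lam (F n) ≤ |D₀| + Γ * ε / 2 := by
      nlinarith [le_abs_self D₀, huineq]
    have h2 : lam (F n) ≤ |D₀| / Γ + ε / 2 := by
      rw [div_add' _ _ _ hΓpos.ne', le_div_iff₀ hΓpos]
      nlinarith [hΓL]
    linarith [hΓD]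
  -- compactness of the 𝒦-cylinders
  have hCn : ∀ n, IsCompact {x : PathSpace K | ∀ t, x.1 t ∈ 𝒦 n t} := by
    intro n
    rw [Subtype.isCompact_iff]
    have hpi : IsCompact (Set.pi Set.univ (fun t => 𝒦 n t)) := isCompact_univ_pi (h𝒦cpt n)
    convert hpi.inter_left hXc using 1
    ext y
    constructor
    · rintro ⟨z, hz, rfl⟩
      exact ⟨z.2, fun t _ => hz t⟩
    · rintro ⟨hy1, hy2⟩
      exact ⟨⟨y, hy1⟩, fun t => hy2 t (Set.mem_univ t), rfl⟩
  -- total mass at most one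
  have hμball : ∀ m : ℕ, μ (Metric.closedBall x₀ (m:ℝ)) ≤ 1 := by
    intro m
    have htest : RMKaux.cutoff x₀ (m:ℝ) ∈ RMKaux.testFns (Metric.closedBall x₀ (m:ℝ)) :=
      ⟨RMKaux.cutoff_Cb x₀ (m:ℝ), RMKaux.cutoff_nonneg x₀ (m:ℝ), fun x hx =>
        le_of_eq (RMKaux.cutoff_eq_one x₀ (m:ℝ) x (Metric.mem_closedBall.1 hx)).symm⟩
    have h1 := RMKaux.rmkMeasure_le_lam hl (isCompact_closedBall x₀ (m:ℝ)) htest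
    have h2 : lam (RMKaux.cutoff x₀ (m:ℝ)) ≤ 1 := by
      have h3 := hl.mono (RMKaux.cutoff_Cb x₀ (m:ℝ)) (RMKaux.Cb.const 1)
        (fun x => RMKaux.cutoff_le_one x₀ (m:ℝ) x)
      rwa [hone] at h3
    calc μ (Metric.closedBall x₀ (m:ℝ)) ≤ ENNReal.ofReal (lam (RMKaux.cutoff x₀ (m:ℝ))) := h1
      _ ≤ ENNReal.ofReal 1 := ENNReal.ofReal_le_ofReal h2
      _ = 1 := ENNReal.ofReal_one
  have hμuniv_le : μ Set.univ ≤ 1 := by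
    have hU : (Set.univ : Set (PathSpace K)) = ⋃ m : ℕ, Metric.closedBall x₀ (m:ℝ) := by
      ext x
      simp only [Set.mem_univ, true_iff, Set.mem_iUnion]
      obtain ⟨m, hm⟩ := exists_nat_ge (dist x x₀)
      exact ⟨m, Metric.mem_closedBall.2 hm⟩
    rw [hU, Directed.measure_iUnion ?_]
    · exact iSup_le hμball
    · intro i j
      refine ⟨max i j, Metric.closedBall_subset_closedBall ?_, Metric.closedBall_subset_closedBall ?_⟩
      · exact_mod_cast le_max_left i j
      · exact_mod_cast le_max_right i j
  haveI hμfin : IsFiniteMeasure μ := ⟨lt_of_le_of_lt hμuniv_le ENNReal.one_lt_top⟩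
  -- lower bound on the mass
  have hμuniv_ge : ∀ ε : ℝ, 0 < ε → 1 - ε ≤ (μ Set.univ).toReal := by
    intro ε hε
    obtain ⟨n, hn⟩ := htight ε hε
    obtain ⟨R, hR⟩ := (hCn n).isBounded.subset_closedBall x₀
    obtain ⟨m, hm⟩ := exists_nat_ge R
    set χ : PathSpace K → ℝ := RMKaux.cutoff x₀ (m:ℝ) with hχdef
    have hχCb : RMKaux.Cb χ := RMKaux.cutoff_Cb x₀ (m:ℝ)
    have hχmem : memC K χ := EMOTAux.memC_of_Cb hχCb
    have h1χmem : memC K (fun x => 1 - χ x) :=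
      EMOTAux.memC_sub (EMOTAux.memC_const 1) hχmem
    have hsplit : (1:ℝ) = lam χ + lam (fun x => 1 - χ x) := by
      have h := hlin.1 χ (fun x => 1 - χ x) hχmem h1χmem
      have h2 : (χ + fun x => 1 - χ x) = fun _ : PathSpace K => (1:ℝ) := by
        funext x; simp
      rw [h2, hone] at h
      exact h
    have hle : lam (fun x => 1 - χ x) ≤ lam (F n) := by
      refine EMOTAux.lam_mono_memC lam hlin hpos h1χmem (hFmemC n) (fun x => ?_)
      by_cases hx : ∀ t, x.1 t ∈ 𝒦 n t
      · have hxball : dist x x₀ ≤ (m:ℝ) :=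
          le_trans (Metric.mem_closedBall.1 (hR hx)) hm
        have hχ1 : χ x = 1 := RMKaux.cutoff_eq_one x₀ (m:ℝ) x hxball
        rw [hχ1]
        simpa using hF0 n x
      · have h2 := hfdom n x hx
        have h3 := RMKaux.cutoff_nonneg x₀ (m:ℝ) x
        have h4 := EMOTAux.wt_nonneg (K := K) x
        rw [← hχdef] at h3
        linarith
    have hχint : lam χ = ∫ x, χ x ∂μ :=
      RMKaux.lam_eq_integral hl (RMKaux.cutoff_continuous' x₀ (m:ℝ))
        (RMKaux.cutoff_hasCompactSupport x₀ (m:ℝ))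
    have hχle : ∫ x, χ x ∂μ ≤ (μ Set.univ).toReal := by
      have hint1 : Integrable χ μ :=
        (RMKaux.cutoff_continuous' x₀ (m:ℝ)).integrable_of_hasCompactSupport
          (RMKaux.cutoff_hasCompactSupport x₀ (m:ℝ))
      have h5 := integral_mono hint1 (integrable_const (1:ℝ))
        (fun x => RMKaux.cutoff_le_one x₀ (m:ℝ) x)
      rwa [integral_const, smul_eq_mul, mul_one] at h5
    linarith
  have hprob : IsProbabilityMeasure μ := by
    constructor
    refine le_antisymm hμuniv_le ?_
    have h1 : 1 ≤ (μ Set.univ).toReal := by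
      by_contra h
      push_neg at h
      have hε : 0 < (1 - (μ Set.univ).toReal)/2 := by linarith
      have := hμuniv_ge _ hε
      linarith
    have h2 : μ Set.univ ≠ ⊤ := (lt_of_le_of_lt hμuniv_le ENNReal.one_lt_top).ne
    calc (1:ℝ≥0∞) = ENNReal.ofReal 1 := ENNReal.ofReal_one.symm
      _ ≤ ENNReal.ofReal (μ Set.univ).toReal := ENNReal.ofReal_le_ofReal h1
      _ = μ Set.univ := ENNReal.ofReal_toReal h2
  -- the key integral bound
  have hkey : ∀ g : PathSpace K → ℝ, memC K g → (∀ x, 0 ≤ g x) →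
      ∫⁻ x, ENNReal.ofReal (g x) ∂μ ≤ ENNReal.ofReal (lam g) := by
    intro g hg hg0
    exact RMKaux.lintegral_le_lam hl x₀ hg.1 hg0 (fun h hCb _ hle =>
      EMOTAux.lam_mono_memC lam hlin hpos (EMOTAux.memC_of_Cb hCb) hg hle)
  have hwt_int : Integrable (wt K) μ := by
    refine ⟨EMOTAux.wt_continuous.aestronglyMeasurable, ?_⟩
    rw [hasFiniteIntegral_iff_ofReal (Filter.Eventually.of_forall EMOTAux.wt_nonneg)]
    exact lt_of_le_of_lt (hkey (wt K) EMOTAux.memC_wt EMOTAux.wt_nonneg) ENNReal.ofReal_lt_top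
  have hint_memC : ∀ g : PathSpace K → ℝ, memC K g → Integrable g μ := by
    intro g hg
    obtain ⟨hc, M, hM⟩ := hg
    have h1 : Integrable (fun x => M * (1 + wt K x)) μ :=
      ((integrable_const (1:ℝ)).add hwt_int).const_mul M
    exact Integrable.mono' h1 hc.aestronglyMeasurable
      (Filter.Eventually.of_forall (fun x => hM x))
  have hcoord_int : ∀ t j, Integrable (fun x : PathSpace K => x.1 t j) μ := by
    intro t j
    refine Integrable.mono' hwt_int (EMOTAux.coord_continuous t j).aestronglyMeasurable
      (Filter.Eventually.of_forall (fun x => ?_))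
    calc ‖x.1 t j‖ = |x.1 t j| := rfl
      _ ≤ ∑ j', |x.1 t j'| :=
        Finset.single_le_sum (f := fun j' => |x.1 t j'|)
          (fun j' _ => abs_nonneg _) (Finset.mem_univ j)
      _ ≤ wt K x :=
        Finset.single_le_sum (f := fun t' => ∑ j', |x.1 t' j'|)
          (fun t' _ => Finset.sum_nonneg fun j' _ => abs_nonneg _) (Finset.mem_univ t)
  -- the representation on all of C_{0:T}
  have hrep : ∀ φ, memC K φ → lam φ = ∫ x, φ x ∂μ := by
    intro φ hφ
    obtain ⟨hφc, M₀, hM₀⟩ := hφ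
    have hφmemC : memC K φ := ⟨hφc, M₀, hM₀⟩
    set Mb : ℝ := max M₀ 0 with hMbdef
    have hMb0 : 0 ≤ Mb := le_max_right _ _
    have hMbb : ∀ x, |φ x| ≤ Mb * (1 + wt K x) := fun x =>
      (hM₀ x).trans (mul_le_mul_of_nonneg_right (le_max_left _ _)
        (by linarith [EMOTAux.wt_nonneg (K := K) x]))
    have hφint : Integrable φ μ := hint_memC φ hφmemC
    have hmain : ∀ ε : ℝ, 0 < ε → |lam φ - ∫ x, φ x ∂μ| ≤ 2 * Mb * ε := by
      intro ε hε
      obtain ⟨n, hn⟩ := htight ε hε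
      obtain ⟨R, hR⟩ := (hCn n).isBounded.subset_closedBall x₀
      obtain ⟨m, hm⟩ := exists_nat_ge R
      set χ : PathSpace K → ℝ := RMKaux.cutoff x₀ (m:ℝ) with hχdef
      have hχCb : RMKaux.Cb χ := RMKaux.cutoff_Cb x₀ (m:ℝ)
      set φχ : PathSpace K → ℝ := φ * χ with hφχdef
      have hφχc : Continuous φχ := hφc.mul hχCb.1
      have hφχsupp : HasCompactSupport φχ := by
        refine HasCompactSupport.of_support_subset_isCompact
          (isCompact_closedBall x₀ ((m:ℝ)+1)) ?_
        intro x hx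
        rw [Function.mem_support] at hx
        have h5 : χ x ≠ 0 := fun h => hx (by
          rw [hφχdef]; show φ x * χ x = 0; rw [h, mul_zero])
        exact RMKaux.cutoff_support x₀ (m:ℝ) (Function.mem_support.2 h5)
      have hrepχ : lam φχ = ∫ x, φχ x ∂μ := RMKaux.lam_eq_integral hl hφχc hφχsupp
      set ψ : PathSpace K → ℝ := fun x => φ x * (1 - χ x) with hψdef
      have hψbound : ∀ x, |ψ x| ≤ Mb * F n x := by
        intro x
        by_cases hx : ∀ t, x.1 t ∈ 𝒦 n t
        · have hxball : dist x x₀ ≤ (m:ℝ) :=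
            le_trans (Metric.mem_closedBall.1 (hR hx)) hm
          have hχ1 : χ x = 1 := RMKaux.cutoff_eq_one x₀ (m:ℝ) x hxball
          have h6 : ψ x = 0 := by rw [hψdef]; show φ x * (1 - χ x) = 0; rw [hχ1]; ring
          rw [h6, abs_zero]
          exact mul_nonneg hMb0 (hF0 n x)
        · have h1 := hfdom n x hx
          have h2 : |1 - χ x| ≤ 1 := by
            have h3 := RMKaux.cutoff_nonneg x₀ (m:ℝ) x
            have h4 := RMKaux.cutoff_le_one x₀ (m:ℝ) x
            rw [← hχdef] at h3 h4
            rw [abs_le]; constructor <;> linarith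
          calc |ψ x| = |φ x| * |1 - χ x| := by rw [hψdef]; exact abs_mul _ _
            _ ≤ (Mb * (1 + wt K x)) * 1 :=
              mul_le_mul (hMbb x) h2 (abs_nonneg _) (mul_nonneg hMb0 (by linarith [EMOTAux.wt_nonneg (K := K) x]))
            _ = Mb * (1 + wt K x) := mul_one _
            _ ≤ Mb * F n x := mul_le_mul_of_nonneg_left h1 hMb0
      have hφχmem : memC K φχ := EMOTAux.memC_mul_Cb hφmemC hχCb
      have hψmem : memC K ψ := by
        have hCb1χ : RMKaux.Cb (fun x => 1 - χ x) := (RMKaux.Cb.const 1).sub hχCb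
        exact EMOTAux.memC_mul_Cb hφmemC hCb1χ
      have hsplitlam : lam φ = lam φχ + lam ψ := by
        have h := hlin.1 φχ ψ hφχmem hψmem
        have h2 : φχ + ψ = φ := by
          funext x
          show φ x * χ x + φ x * (1 - χ x) = φ x
          ring
        rw [h2] at h
        exact h
      have hMbF : memC K (fun x => Mb * F n x) := EMOTAux.memC_smul Mb (hFmemC n)
      have hMnegF : memC K (fun x => -(Mb * F n x)) := by
        have h := EMOTAux.memC_smul (-1) hMbF
        have h2 : (-1:ℝ) • (fun x => Mb * F n x) = fun x => -(Mb * F n x) := by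
          funext x; simp
        rwa [h2] at h
      have hneg : lam (fun x => -(Mb * F n x)) = -(lam (fun x => Mb * F n x)) := by
        have h := hlin.2.1 (-1) (fun x => Mb * F n x) hMbF
        have h2 : (-1:ℝ) • (fun x => Mb * F n x) = fun x => -(Mb * F n x) := by
          funext x; simp
        rw [h2] at h
        rw [h]; ring
      have hMllam : lam (fun x => Mb * F n x) = Mb * lam (F n) := by
        have h := hlin.2.1 Mb (F n) (hFmemC n)
        exact h
      have hlamψ : |lam ψ| ≤ Mb * lam (F n) := by
        have hub : lam ψ ≤ lam (fun x => Mb * F n x) :=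
          EMOTAux.lam_mono_memC lam hlin hpos hψmem hMbF
            (fun x => le_trans (le_abs_self _) (hψbound x))
        have hlb : lam (fun x => -(Mb * F n x)) ≤ lam ψ :=
          EMOTAux.lam_mono_memC lam hlin hpos hMnegF hψmem
            (fun x => by have h7 := hψbound x; have h8 := neg_abs_le (ψ x); linarith)
        rw [abs_le]
        constructor
        · rw [← hMllam]; linarith [hlb, hneg]
        · rw [← hMllam]; exact hub
      have hFint : Integrable (F n) μ := hint_memC _ (hFmemC n)
      have hψint : Integrable ψ μ := hint_memC _ hψmem
      have hintF_le : ∫ x, F n x ∂μ ≤ lam (F n) := by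
        have h1 : ∫ x, F n x ∂μ = (∫⁻ x, ENNReal.ofReal (F n x) ∂μ).toReal :=
          integral_eq_lintegral_of_nonneg_ae (Filter.Eventually.of_forall (hF0 n))
            (hFmemC n).1.aestronglyMeasurable
        rw [h1]
        have h2 := hkey (F n) (hFmemC n) (hF0 n)
        have h3 := ENNReal.toReal_mono ENNReal.ofReal_ne_top h2
        rwa [ENNReal.toReal_ofReal (hlamF0 n)] at h3
      have hintψ : |∫ x, ψ x ∂μ| ≤ Mb * ε := by
        have habs1 : |∫ x, ψ x ∂μ| ≤ ∫ x, |ψ x| ∂μ := by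
          have h9 := norm_integral_le_integral_norm (μ := μ) ψ
          simpa [Real.norm_eq_abs] using h9
        calc |∫ x, ψ x ∂μ| ≤ ∫ x, |ψ x| ∂μ := habs1
          _ ≤ ∫ x, Mb * F n x ∂μ :=
            integral_mono hψint.abs (hFint.const_mul Mb) hψbound
          _ = Mb * ∫ x, F n x ∂μ := integral_const_mul Mb (F n)
          _ ≤ Mb * lam (F n) := mul_le_mul_of_nonneg_left hintF_le hMb0
          _ ≤ Mb * ε := mul_le_mul_of_nonneg_left hn hMb0
      have hsplitint : ∫ x, φ x ∂μ = ∫ x, φχ x ∂μ + ∫ x, ψ x ∂μ := by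
        rw [← integral_add (hint_memC _ hφχmem) hψint]
        congr 1
        funext x
        show φ x = φ x * χ x + φ x * (1 - χ x)
        ring
      have harg : lam φ - ∫ x, φ x ∂μ = lam ψ - ∫ x, ψ x ∂μ := by
        rw [hsplitlam, hsplitint, hrepχ]
        ring
      rw [harg]
      calc |lam ψ - ∫ x, ψ x ∂μ| ≤ |lam ψ| + |∫ x, ψ x ∂μ| := by
            rw [sub_eq_add_neg]
            exact (abs_add_le _ _).trans (by rw [abs_neg])
        _ ≤ Mb * lam (F n) + Mb * ε := add_le_add hlamψ hintψ
        _ ≤ Mb * ε + Mb * ε :=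
            add_le_add_left (mul_le_mul_of_nonneg_left hn hMb0) _
        _ = 2 * Mb * ε := by ring
    by_contra hne
    have habs : 0 < |lam φ - ∫ x, φ x ∂μ| := abs_pos.2 (sub_ne_zero.2 hne)
    set Dd : ℝ := |lam φ - ∫ x, φ x ∂μ| with hDd
    have h1 := hmain (Dd / (4 * Mb + 1)) (by positivity)
    have h2 : 2 * Mb * (Dd / (4 * Mb + 1)) < Dd := by
      rw [show 2 * Mb * (Dd / (4 * Mb + 1)) = (2 * Mb * Dd) / (4 * Mb + 1) by ring,
        div_lt_iff₀ (by positivity)]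
      nlinarith
    linarith
  -- assemble existence and uniqueness
  refine ⟨μ, ⟨⟨hprob, hcoord_int⟩, hrep⟩, ?_⟩
  rintro Q ⟨⟨hQprob, hQint⟩, hQrep⟩
  haveI := hQprob
  haveI := hprob
  refine ext_of_forall_lintegral_eq_of_IsFiniteMeasure (fun f => ?_)
  have hfcont : Continuous (fun x : PathSpace K => ((f x : NNReal) : ℝ)) :=
    NNReal.continuous_coe.comp f.continuous
  obtain ⟨Cf, hCf⟩ := f.bounded
  have hfb : ∀ x, |((f x : NNReal) : ℝ)| ≤ ((f x₀ : NNReal) : ℝ) + Cf := fun x => by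
    rw [abs_of_nonneg (f x).coe_nonneg]
    have h1 := hCf x x₀
    rw [NNReal.dist_eq] at h1
    have h2 := abs_le.1 h1
    linarith [h2.1, h2.2]
  have hfmem : memC K (fun x => ((f x : NNReal) : ℝ)) :=
    EMOTAux.memC_of_Cb ⟨hfcont, ((f x₀ : NNReal) : ℝ) + Cf, hfb⟩
  have hQi : Integrable (fun x => ((f x : NNReal) : ℝ)) Q :=
    Integrable.mono' (integrable_const (((f x₀ : NNReal) : ℝ) + Cf))
      hfcont.aestronglyMeasurable
      (Filter.Eventually.of_forall (fun x => hfb x))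
  have hμi : Integrable (fun x => ((f x : NNReal) : ℝ)) μ :=
    Integrable.mono' (integrable_const (((f x₀ : NNReal) : ℝ) + Cf))
      hfcont.aestronglyMeasurable
      (Filter.Eventually.of_forall (fun x => hfb x))
  rw [lintegral_coe_eq_integral f hQi, lintegral_coe_eq_integral f hμi,
    ← hQrep _ hfmem, ← hrep _ hfmem]
end EMOT
end
end

section
/- Suppose for each t = 0,…,T a proper convex functional D_t : ca¹(K̃_t) → (−∞,+∞] is given which is lower semicontinuous for the topology σ(ca¹(K̃_t), E_t), and define D(γ) := Σ_{t=0}^T D_t(γ_t) on ca¹(Ω). Then: (1) each map γ ↦ D_t(γ_t) and the map γ ↦ D(γ) are lower semicontinuous on ca¹(Ω) for the topology σ(ca¹(Ω), E); (2) if in addition dom(D_t) ⊆ Prob¹(K̃_t) for every t, then U(φ) = Σ_{t=0}^T U_t(φ_t) and S^U(φ) = Σ_{t=0}^T S^{U_t}(φ_t) for every φ ∈ E, where U, U_t are the concave functionals conjugate to D, D_t respectively. -/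
open MeasureTheory Filter Topology
open scoped ENNReal BigOperators

noncomputable section

namespace EMOT

variable {T d : ℕ}

/-- The fiber `K̃_t = ∏_{j=1}^d K_t^j`. -/
abbrev Fiber (K : Fin (T + 1) → Fin d → Set ℝ) (t : Fin (T + 1)) : Type :=
  { v : Fin d → ℝ // ∀ j, v j ∈ K t j }

variable (K : Fin (T + 1) → Fin d → Set ℝ)

/-- Projection on the time `t` coordinates. -/
def proj (t : Fin (T + 1)) (x : PathSpace K) : Fiber K t :=
  ⟨fun j => x.1 t j, fun j => x.2 t j⟩

/-- Integral of a real function against a finite signed measure, via the Jordan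
decomposition. -/
def sInt {X : Type} [MeasurableSpace X] (γ : SignedMeasure X) (f : X → ℝ) : ℝ :=
  ∫ x, f x ∂γ.toJordanDecomposition.posPart -
    ∫ x, f x ∂γ.toJordanDecomposition.negPart

/-- The `t`-th marginal of a signed measure on the path space. -/
def smarg (t : Fin (T + 1)) (γ : SignedMeasure (PathSpace K)) :
    SignedMeasure (Fiber K t) :=
  γ.map (proj K t)

/-- `γ ∈ ca¹(Ω)`: all coordinates are `|γ|`-integrable. -/
def ca1 (γ : SignedMeasure (PathSpace K)) : Prop :=
  ∀ t j, Integrable (fun x : PathSpace K => x.1 t j) γ.totalVariation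

/-- `γ ∈ ca¹(K̃_t)`. -/
def ca1Fib (t : Fin (T + 1)) (γ : SignedMeasure (Fiber K t)) : Prop :=
  ∀ j, Integrable (fun v : Fiber K t => v.1 j) γ.totalVariation

/-- Membership in `C_t`: continuous with linear growth in the time-`t` variables. -/
def memCt (t : Fin (T + 1)) (φ : Fiber K t → ℝ) : Prop :=
  Continuous φ ∧ ∃ M : ℝ, ∀ v, |φ v| ≤ M * (1 + ∑ j, |v.1 j|)

/-- The one-period optimized certainty equivalent `S^{U_t}`. -/
def SUt (t : Fin (T + 1)) (Ut : (Fiber K t → ℝ) → EReal)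
    (φt : Fiber K t → ℝ) : EReal :=
  ⨆ α : ℝ, (Ut (fun v => φt v + α) - (α : EReal))

/-- The optimized certainty equivalent `S^U` for a functional of vectors of one-period
payoffs. -/
def SUprod (U : ((t : Fin (T + 1)) → Fiber K t → ℝ) → EReal)
    (φ : (t : Fin (T + 1)) → Fiber K t → ℝ) : EReal :=
  ⨆ β : Fin (T + 1) → ℝ, (U (fun t v => φ t v + β t) - ((∑ t, β t : ℝ) : EReal))

/-- Membership in `E = E_0 × … × E_T`. -/
def memE2 (E : (t : Fin (T + 1)) → Set (Fiber K t → ℝ))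
    (φ : (t : Fin (T + 1)) → Fiber K t → ℝ) : Prop := ∀ t, φ t ∈ E t

/-- One-period penalization: the conjugate of `U_t`. -/
def Dt2 (t : Fin (T + 1)) (Et : Set (Fiber K t → ℝ))
    (Ut : (Fiber K t → ℝ) → EReal) (γ : SignedMeasure (Fiber K t)) : EReal :=
  ⨆ (φt : Fiber K t → ℝ) (_ : φt ∈ Et), (Ut φt - ((sInt γ φt : ℝ) : EReal))

/-- The penalization `D`, conjugate of `U` with respect to the pairing
`⟨γ, φ⟩ = Σ_t ∫ φ_t dγ_t`. -/
def Dprod (E : (t : Fin (T + 1)) → Set (Fiber K t → ℝ))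
    (U : ((t : Fin (T + 1)) → Fiber K t → ℝ) → EReal)
    (γ : SignedMeasure (PathSpace K)) : EReal :=
  ⨆ (φ : (t : Fin (T + 1)) → Fiber K t → ℝ) (_ : memE2 K E φ),
    (U φ - ((∑ t, sInt (smarg K t γ) (φ t) : ℝ) : EReal))

/-- The weak topology `σ(ca¹(K̃_t), E_t)`. -/
def fibTop (t : Fin (T + 1)) (Et : Set (Fiber K t → ℝ)) :
    TopologicalSpace { γ : SignedMeasure (Fiber K t) // ca1Fib K t γ } :=
  TopologicalSpace.induced
    (fun γ => fun φ : { φ : Fiber K t → ℝ // φ ∈ Et } => sInt γ.1 φ.1)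
    inferInstance

/-- The weak topology `σ(ca¹(Ω), E)`. -/
def pathTop (E : (t : Fin (T + 1)) → Set (Fiber K t → ℝ)) :
    TopologicalSpace { γ : SignedMeasure (PathSpace K) // ca1 K γ } :=
  TopologicalSpace.induced
    (fun γ => fun p : (t : Fin (T + 1)) × { φ : Fiber K t → ℝ // φ ∈ E t } =>
      sInt (smarg K p.1 γ.1) p.2.1)
    inferInstance

/-- The conjugate `V_t` of `D_t` and the induced concave functional `U_t`. -/
def Vt (t : Fin (T + 1)) (Dt : SignedMeasure (Fiber K t) → EReal)
    (φt : Fiber K t → ℝ) : EReal :=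
  ⨆ (γ : SignedMeasure (Fiber K t)) (_ : ca1Fib K t γ),
    (((sInt γ φt : ℝ) : EReal) - Dt γ)

def UtOf (t : Fin (T + 1)) (Dt : SignedMeasure (Fiber K t) → EReal)
    (φt : Fiber K t → ℝ) : EReal :=
  - Vt K t Dt (fun v => -(φt v))

/-- The conjugate `V` of `D = Σ_t D_t(γ_t)` and the induced concave functional `U`. -/
def Vprod (Dt : (t : Fin (T + 1)) → SignedMeasure (Fiber K t) → EReal)
    (φ : (t : Fin (T + 1)) → Fiber K t → ℝ) : EReal :=
  ⨆ (γ : SignedMeasure (PathSpace K)) (_ : ca1 K γ),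
    (((∑ t, sInt (smarg K t γ) (φ t) : ℝ) : EReal) - ∑ t, Dt t (smarg K t γ))

def UOf (Dt : (t : Fin (T + 1)) → SignedMeasure (Fiber K t) → EReal)
    (φ : (t : Fin (T + 1)) → Fiber K t → ℝ) : EReal :=
  - Vprod K Dt (fun t v => -(φ t v))


namespace EMOTAux
open MeasureTheory
open scoped ENNReal NNReal BigOperators


lemma ereal_add_sub_add (b c : EReal) (x y : ℝ) :
    (b + c) - ((x + y : ℝ) : EReal) = (b - (x : EReal)) + (c - (y : EReal)) := by
  induction b using EReal.rec with
  | bot => simp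
  | top =>
    induction c using EReal.rec with
    | bot => simp
    | top => simp [EReal.top_sub_coe, EReal.top_add_top, ← EReal.coe_add]
    | coe c => simp [EReal.top_sub_coe, EReal.top_add_coe, ← EReal.coe_add, ← EReal.coe_sub]
  | coe b =>
    induction c using EReal.rec with
    | bot => simp
    | top => simp [EReal.top_sub_coe, EReal.coe_add_top, ← EReal.coe_add, ← EReal.coe_sub]
    | coe c =>
      norm_cast
      ring

lemma ereal_coe_add_sub (b c : EReal) (x y : ℝ) (hb : b ≠ ⊥) (hc : c ≠ ⊥) :
    ((x + y : ℝ) : EReal) - (b + c) = ((x : EReal) - b) + ((y : EReal) - c) := by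
  induction b using EReal.rec with
  | bot => exact absurd rfl hb
  | top =>
    rw [EReal.top_add_of_ne_bot hc, EReal.sub_top, EReal.sub_top, EReal.bot_add]
  | coe b =>
    induction c using EReal.rec with
    | bot => exact absurd rfl hc
    | top =>
      rw [EReal.add_top_of_ne_bot (EReal.coe_ne_bot b), EReal.sub_top, EReal.sub_top,
        EReal.add_bot]
    | coe c =>
      norm_cast
      ring

lemma ereal_sum_ne_bot {ι : Type*} (s : Finset ι) (b : ι → EReal) (hb : ∀ i, b i ≠ ⊥) :
    (∑ i ∈ s, b i) ≠ ⊥ := by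
  classical
  induction s using Finset.induction with
  | empty => simp
  | insert _ _ h ih =>
    rw [Finset.sum_insert h]
    simp only [ne_eq, EReal.add_eq_bot_iff]
    exact fun h' => h'.elim (hb _) ih

lemma ereal_sum_sub_coe {ι : Type*} (s : Finset ι) (a : ι → ℝ) (b : ι → EReal) :
    (∑ i ∈ s, b i) - ((∑ i ∈ s, a i : ℝ) : EReal) = ∑ i ∈ s, (b i - (a i : EReal)) := by
  classical
  induction s using Finset.induction with
  | empty => simp
  | insert _ _ h ih =>
    rw [Finset.sum_insert h, Finset.sum_insert h, Finset.sum_insert h, ereal_add_sub_add, ih]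

lemma ereal_coe_sub_sum {ι : Type*} (s : Finset ι) (a : ι → ℝ) (b : ι → EReal)
    (hb : ∀ i, b i ≠ ⊥) :
    ((∑ i ∈ s, a i : ℝ) : EReal) - (∑ i ∈ s, b i) = ∑ i ∈ s, ((a i : EReal) - b i) := by
  classical
  induction s using Finset.induction with
  | empty => simp
  | insert _ _ h ih =>
    rw [Finset.sum_insert h, Finset.sum_insert h, Finset.sum_insert h,
      ereal_coe_add_sub _ _ _ _ (hb _) (ereal_sum_ne_bot _ _ hb), ih]

lemma ereal_coe_sub_ne_bot (x : ℝ) (b : EReal) (hb : b ≠ ⊤) : ((x : EReal) - b) ≠ ⊥ := by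
  induction b using EReal.rec with
  | bot => rw [EReal.coe_sub_bot]; exact bot_lt_top.ne'
  | top => exact absurd rfl hb
  | coe b => rw [← EReal.coe_sub]; exact EReal.coe_ne_bot _

lemma ereal_neg_sum {ι : Type*} (s : Finset ι) (b : ι → EReal) (hb : ∀ i, b i ≠ ⊥) :
    -(∑ i ∈ s, b i) = ∑ i ∈ s, -(b i) := by
  have := ereal_coe_sub_sum s (fun _ => 0) b hb
  simpa using this



lemma ereal_add_iSup {ι : Sort*} (a : EReal) (f : ι → EReal) :
    a + ⨆ i, f i = ⨆ i, (a + f i) := by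
  refine le_antisymm ?_ (iSup_le fun i => add_le_add_right (le_iSup f i) a)
  induction a using EReal.rec with
  | bot => simp
  | top =>
    by_cases h : ⨆ i, f i = ⊥
    · rw [h, EReal.add_bot]; exact bot_le
    · rw [iSup_eq_bot] at h
      push_neg at h
      obtain ⟨i, hi⟩ := h
      rw [EReal.top_add_of_ne_bot (fun hb => hi (le_bot_iff.1 (hb ▸ le_iSup f i)))]
      exact le_trans (le_of_eq (EReal.top_add_of_ne_bot hi).symm) (le_iSup (fun i => (⊤:EReal) + f i) i)
  | coe a =>
    rw [add_comm]
    refine (EReal.le_sub_iff_add_le (Or.inl (EReal.coe_ne_bot a))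
      (Or.inl (EReal.coe_ne_top a))).1 ?_
    refine iSup_le fun i => (EReal.le_sub_iff_add_le (Or.inl (EReal.coe_ne_bot a))
      (Or.inl (EReal.coe_ne_top a))).2 ?_
    exact le_trans (le_of_eq (add_comm _ _)) (le_iSup (fun i => (a : EReal) + f i) i)

lemma ereal_iSup_add {ι : Sort*} (a : EReal) (f : ι → EReal) :
    (⨆ i, f i) + a = ⨆ i, (f i + a) := by
  rw [add_comm, ereal_add_iSup]
  simp_rw [add_comm]

lemma ereal_sum_iSup {ι : Type*} [DecidableEq ι] {κ : ι → Type*} [∀ i, Nonempty (κ i)]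
    (f : ∀ i, κ i → EReal) (s : Finset ι) :
    ∑ i ∈ s, (⨆ k, f i k) = ⨆ g : (∀ i, κ i), ∑ i ∈ s, f i (g i) := by
  induction s using Finset.induction with
  | empty => simp
  | @insert a s h ih =>
    rw [Finset.sum_insert h, ih, ereal_iSup_add]
    simp_rw [ereal_add_iSup]
    refine le_antisymm (iSup_le fun k => iSup_le fun g => ?_) (iSup_le fun g => ?_)
    · refine le_trans (le_of_eq ?_)
        (le_iSup (fun g : ∀ i, κ i => ∑ i ∈ insert a s, f i (g i)) (Function.update g a k))
      rw [Finset.sum_insert h, Function.update_self]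
      refine congrArg (fun z => f a k + z) (Finset.sum_congr rfl fun i hi => ?_)
      rw [Function.update_of_ne (fun he => h (by rwa [he] at hi))]
    · rw [Finset.sum_insert h]
      have h1 := le_iSup (fun g' : ∀ i, κ i => f a (g a) + ∑ i ∈ s, f i (g' i)) g
      have h2 := le_iSup (fun k : κ a => ⨆ g' : ∀ i, κ i, f a k + ∑ i ∈ s, f i (g' i)) (g a)
      exact le_trans h1 h2



variable {α β : Type*} [MeasurableSpace α] [MeasurableSpace β]

lemma toSignedMeasure_map (μ : Measure α) [IsFiniteMeasure μ] {f : α → β} (hf : Measurable f) :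
    μ.toSignedMeasure.map f = (μ.map f).toSignedMeasure := by
  ext i hi
  rw [VectorMeasure.map_apply _ hf hi, Measure.toSignedMeasure_apply_measurable (hf hi),
    Measure.toSignedMeasure_apply_measurable hi, map_measureReal_apply hf hi]

lemma signed_map_sub (s t : SignedMeasure α) (f : α → β) :
    (s - t).map f = s.map f - t.map f := by
  by_cases hf : Measurable f
  · ext i hi
    rw [VectorMeasure.map_apply _ hf hi, VectorMeasure.sub_apply, VectorMeasure.sub_apply,
      VectorMeasure.map_apply _ hf hi, VectorMeasure.map_apply _ hf hi]
  · rw [VectorMeasure.map_not_measurable _ hf, VectorMeasure.map_not_measurable _ hf,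
      VectorMeasure.map_not_measurable _ hf, sub_zero]

lemma toJordanDecomposition_toSignedMeasure_measure (μ : Measure α) [IsFiniteMeasure μ] :
    μ.toSignedMeasure.toJordanDecomposition
      = ⟨μ, 0, Measure.MutuallySingular.zero_right⟩ := by
  refine SignedMeasure.toJordanDecomposition_eq ?_
  show μ.toSignedMeasure = μ.toSignedMeasure - (0 : Measure α).toSignedMeasure
  rw [Measure.toSignedMeasure_zero, sub_zero]

lemma totalVariation_toSignedMeasure (μ : Measure α) [IsFiniteMeasure μ] :
    μ.toSignedMeasure.totalVariation = μ := by
  rw [SignedMeasure.totalVariation, toJordanDecomposition_toSignedMeasure_measure]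
  simp

lemma totalVariation_sub_le (μ ν : Measure α) [IsFiniteMeasure μ] [IsFiniteMeasure ν] :
    SignedMeasure.totalVariation (μ.toSignedMeasure - ν.toSignedMeasure) ≤ μ + ν := by
  set s := μ.toSignedMeasure - ν.toSignedMeasure with hs
  obtain ⟨i, hi₁, hi₂, hi₃, hpos, hneg⟩ := s.toJordanDecomposition_spec
  rw [Measure.le_iff]
  intro A hA
  rw [SignedMeasure.totalVariation, Measure.add_apply, hpos, hneg,
    SignedMeasure.toMeasureOfZeroLE_apply _ hi₂ hi₁ hA,
    SignedMeasure.toMeasureOfLEZero_apply _ hi₃ hi₁.compl hA, Measure.add_apply]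
  have hmA : μ A ≠ ∞ := measure_ne_top μ A
  have hnA : ν A ≠ ∞ := measure_ne_top ν A
  have h1 : s (i ∩ A) ≤ (μ A).toReal := by
    rw [hs, VectorMeasure.sub_apply,
      Measure.toSignedMeasure_apply_measurable (hi₁.inter hA),
      Measure.toSignedMeasure_apply_measurable (hi₁.inter hA)]
    refine le_trans (sub_le_self _ ENNReal.toReal_nonneg) ?_
    exact ENNReal.toReal_mono hmA (measure_mono Set.inter_subset_right)
  have h2 : -s (iᶜ ∩ A) ≤ (ν A).toReal := by
    rw [hs, VectorMeasure.sub_apply,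
      Measure.toSignedMeasure_apply_measurable (hi₁.compl.inter hA),
      Measure.toSignedMeasure_apply_measurable (hi₁.compl.inter hA), neg_sub]
    refine le_trans (sub_le_self _ ENNReal.toReal_nonneg) ?_
    exact ENNReal.toReal_mono hnA (measure_mono Set.inter_subset_right)
  refine add_le_add ?_ ?_
  · rw [← ENNReal.ofReal_toReal hmA, ENNReal.ofReal, ENNReal.coe_le_coe]
    exact (Real.le_toNNReal_iff_coe_le ENNReal.toReal_nonneg).2 h1
  · rw [← ENNReal.ofReal_toReal hnA, ENNReal.ofReal, ENNReal.coe_le_coe]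
    exact (Real.le_toNNReal_iff_coe_le ENNReal.toReal_nonneg).2 h2

lemma totalVariation_map_le (s : SignedMeasure α) {f : α → β} (hf : Measurable f) :
    SignedMeasure.totalVariation (s.map f) ≤ s.totalVariation.map f := by
  have hdec := s.toSignedMeasure_toJordanDecomposition
  set P := s.toJordanDecomposition.posPart
  set N := s.toJordanDecomposition.negPart
  have h1 : s.map f = (P.map f).toSignedMeasure - (N.map f).toSignedMeasure := by
    conv_lhs => rw [← hdec]
    rw [JordanDecomposition.toSignedMeasure, signed_map_sub,
      toSignedMeasure_map _ hf, toSignedMeasure_map _ hf]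
  rw [h1]
  refine le_trans (totalVariation_sub_le _ _) ?_
  rw [SignedMeasure.totalVariation, Measure.map_add _ _ hf]


lemma map_eval_pi {ι : Type*} [Fintype ι] {κ : ι → Type*} [∀ i, MeasurableSpace (κ i)]
    (μ : ∀ i, Measure (κ i)) [∀ i, IsProbabilityMeasure (μ i)] (t : ι) :
    (Measure.pi μ).map (Function.eval t) = μ t := by
  classical
  ext s hs
  rw [Measure.map_apply (measurable_pi_apply t) hs, Set.eval_preimage, Measure.pi_pi]
  rw [Finset.prod_eq_single t (fun i _ hi => by
      rw [Function.update_of_ne hi]; exact measure_univ) (fun h => absurd (Finset.mem_univ t) h)]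
  rw [Function.update_self]

lemma lsc_sum {X : Type*} [TopologicalSpace X] {ι : Type*} (s : Finset ι) (f : ι → X → EReal)
    (hf : ∀ i, LowerSemicontinuous (f i)) (hne : ∀ i x, f i x ≠ ⊥) :
    LowerSemicontinuous (fun x => ∑ i ∈ s, f i x) := by
  classical
  induction s using Finset.induction with
  | empty => simpa using lowerSemicontinuous_const
  | @insert a s h ih =>
    have := (hf a).add' ih (fun x => EReal.continuousAt_add
      (Or.inr (ereal_sum_ne_bot s (fun i => f i x) (fun i => hne i x)))
      (Or.inl (hne a x)))
    simpa [Finset.sum_insert h] using this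

lemma lsc_comp {X Y : Type*} [TopologicalSpace X] [TopologicalSpace Y] {f : Y → EReal}
    {g : X → Y} (hf : LowerSemicontinuous f) (hg : Continuous g) :
    LowerSemicontinuous (f ∘ g) := fun x y hy => hg.continuousAt.eventually (hf (g x) y hy)

end EMOTAux


section Lemmas
open EMOTAux

lemma measurable_proj (t : Fin (T + 1)) : Measurable (proj K t) :=
  Measurable.subtype_mk ((measurable_pi_apply t).comp measurable_subtype_coe)

lemma measurable_coord (t : Fin (T + 1)) (j : Fin d) :
    Measurable fun v : Fiber K t => v.1 j :=
  (measurable_pi_apply j).comp measurable_subtype_coe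

lemma ca1Fib_smarg {γ : SignedMeasure (PathSpace K)} (h : ca1 K γ) (t : Fin (T + 1)) :
    ca1Fib K t (smarg K t γ) := by
  intro j
  refine Integrable.mono_measure ?_ (totalVariation_map_le γ (measurable_proj K t))
  exact (integrable_map_measure (measurable_coord K t j).aestronglyMeasurable
    (measurable_proj K t).aemeasurable).2 (h t j)

lemma ca1Fib_zero (t : Fin (T + 1)) : ca1Fib K t 0 := by
  intro j
  rw [SignedMeasure.totalVariation_zero]
  exact integrable_zero_measure

/-- Repackaging a family of fiber points as a path. -/
def packf (y : ∀ t, Fiber K t) : PathSpace K := ⟨fun t => (y t).1, fun t j => (y t).2 j⟩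

lemma measurable_packf : Measurable (packf K) :=
  Measurable.subtype_mk (measurable_pi_lambda _ fun t =>
    measurable_subtype_coe.comp (measurable_pi_apply t))

lemma proj_packf (t : Fin (T + 1)) : proj K t ∘ packf K = Function.eval t :=
  funext fun _ => Subtype.ext rfl

lemma exists_product (G : ∀ t, SignedMeasure (Fiber K t))
    (hpos : ∀ t, 0 ≤ G t) (hmass : ∀ t, G t Set.univ = 1) (hca : ∀ t, ca1Fib K t (G t)) :
    ∃ Γ : SignedMeasure (PathSpace K), ca1 K Γ ∧ ∀ t, smarg K t Γ = G t := by
  have hres : ∀ t, (0 : VectorMeasure (Fiber K t) ℝ) ≤[Set.univ] G t :=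
    fun t => (VectorMeasure.le_restrict_univ_iff_le _ _).2 (hpos t)
  let μ : ∀ t, Measure (Fiber K t) :=
    fun t => (G t).toMeasureOfZeroLE Set.univ MeasurableSet.univ (hres t)
  have hts : ∀ t, (μ t).toSignedMeasure = G t :=
    fun t => SignedMeasure.toMeasureOfZeroLE_toSignedMeasure _ (hres t)
  haveI : ∀ t, IsProbabilityMeasure (μ t) := by
    intro t
    constructor
    have h1 : ((μ t) Set.univ).toReal = 1 := by
      rw [← measureReal_def, ← Measure.toSignedMeasure_apply_measurable MeasurableSet.univ, hts]
      exact hmass t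
    rw [← ENNReal.ofReal_toReal (measure_ne_top (μ t) Set.univ), h1, ENNReal.ofReal_one]
  have htv : ∀ t, (G t).totalVariation = μ t := by
    intro t; rw [← hts, totalVariation_toSignedMeasure]
  set ν : Measure (PathSpace K) := (Measure.pi μ).map (packf K) with hν
  haveI : IsProbabilityMeasure ν := Measure.isProbabilityMeasure_map (measurable_packf K).aemeasurable
  have h2 : ∀ t, ν.map (proj K t) = μ t := by
    intro t
    rw [hν, Measure.map_map (measurable_proj K t) (measurable_packf K), proj_packf]
    exact map_eval_pi μ t
  refine ⟨ν.toSignedMeasure, ?_, ?_⟩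
  · intro t j
    rw [totalVariation_toSignedMeasure]
    have h3 : Integrable (fun v : Fiber K t => v.1 j) (μ t) := by
      have := hca t j; rwa [htv t] at this
    have h4 : Integrable (fun y : ∀ s, Fiber K s => (y t).1 j) (Measure.pi μ) := by
      refine (integrable_map_measure (measurable_coord K t j).aestronglyMeasurable
        (measurable_pi_apply t).aemeasurable).1 ?_
      rwa [map_eval_pi μ t]
    have h5 : Measurable (fun x : PathSpace K => x.1 t j) :=
      (measurable_pi_apply j).comp ((measurable_pi_apply t).comp measurable_subtype_coe)
    exact (integrable_map_measure h5.aestronglyMeasurable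
      (measurable_packf K).aemeasurable).2 h4
  · intro t
    rw [smarg, toSignedMeasure_map _ (measurable_proj K t),
      Measure.toSignedMeasure_congr (h2 t), hts t]

lemma Vt_ne_bot (t : Fin (T + 1)) (Dt : SignedMeasure (Fiber K t) → EReal)
    (hne : ∀ γ, Dt γ ≠ ⊥) (hproper : ∃ γ, ca1Fib K t γ ∧ Dt γ ≠ ⊤)
    (ψ : Fiber K t → ℝ) : Vt K t Dt ψ ≠ ⊥ := by
  obtain ⟨γ₀, hγ₀, hD⟩ := hproper
  have hle : ((sInt γ₀ ψ : ℝ) : EReal) - Dt γ₀ ≤ Vt K t Dt ψ :=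
    le_iSup₂ (f := fun γ (_ : ca1Fib K t γ) => ((sInt γ ψ : ℝ) : EReal) - Dt γ) γ₀ hγ₀
  intro hbot
  rw [hbot, le_bot_iff] at hle
  exact ereal_coe_sub_ne_bot _ _ hD hle

lemma Vprod_eq_sum (Dt : (t : Fin (T + 1)) → SignedMeasure (Fiber K t) → EReal)
    (hDt_ne_bot : ∀ t γ, Dt t γ ≠ ⊥)
    (hdom : ∀ t (γ : SignedMeasure (Fiber K t)), Dt t γ ≠ ⊤ →
      0 ≤ γ ∧ γ Set.univ = 1 ∧ ca1Fib K t γ)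
    (ψ : (t : Fin (T + 1)) → Fiber K t → ℝ) :
    Vprod K Dt ψ = ∑ t, Vt K t (Dt t) (ψ t) := by
  classical
  refine le_antisymm ?_ ?_
  · refine iSup₂_le fun γ hγ => ?_
    rw [ereal_coe_sub_sum Finset.univ _ _ (fun t => hDt_ne_bot t _)]
    refine Finset.sum_le_sum fun t _ => ?_
    exact le_iSup₂ (f := fun γ' (_ : ca1Fib K t γ') =>
      ((sInt γ' (ψ t) : ℝ) : EReal) - Dt t γ') (smarg K t γ) (ca1Fib_smarg K hγ t)
  · haveI : ∀ t, Nonempty { γ : SignedMeasure (Fiber K t) // ca1Fib K t γ } :=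
      fun t => ⟨⟨0, ca1Fib_zero K t⟩⟩
    have hrw : ∀ t, Vt K t (Dt t) (ψ t)
        = ⨆ p : { γ : SignedMeasure (Fiber K t) // ca1Fib K t γ },
            (((sInt p.1 (ψ t) : ℝ) : EReal) - Dt t p.1) := by
      intro t
      rw [Vt, iSup_subtype']
    calc ∑ t, Vt K t (Dt t) (ψ t)
        = ⨆ G : ∀ t, { γ : SignedMeasure (Fiber K t) // ca1Fib K t γ },
            ∑ t, (((sInt (G t).1 (ψ t) : ℝ) : EReal) - Dt t (G t).1) := by
          simp_rw [hrw]
          exact ereal_sum_iSup _ _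
      _ ≤ Vprod K Dt ψ := by
          refine iSup_le fun G => ?_
          by_cases hc : ∀ t, Dt t (G t).1 ≠ ⊤
          · obtain ⟨Γ, hΓca, hΓm⟩ := exists_product K (fun t => (G t).1)
              (fun t => (hdom t _ (hc t)).1) (fun t => (hdom t _ (hc t)).2.1)
              (fun t => (G t).2)
            refine le_trans (le_of_eq ?_) (le_iSup₂ (f := fun γ (_ : ca1 K γ) =>
              ((∑ t, sInt (smarg K t γ) (ψ t) : ℝ) : EReal)
                - ∑ t, Dt t (smarg K t γ)) Γ hΓca)
            rw [ereal_coe_sub_sum Finset.univ _ _ (fun t => hDt_ne_bot t _)]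
            exact Finset.sum_congr rfl fun t _ => by rw [hΓm t]
          · push_neg at hc
            obtain ⟨t, ht⟩ := hc
            have hb : (((sInt (G t).1 (ψ t) : ℝ) : EReal) - Dt t (G t).1) = ⊥ := by
              rw [ht, EReal.sub_top]
            rw [← Finset.add_sum_erase _ _ (Finset.mem_univ t), hb, EReal.bot_add]
            exact bot_le

end Lemmas

/-- Lemma `sumislsc`: for proper convex `σ(ca¹(K̃_t), E_t)`-lower
semicontinuous penalizations `D_t`, the maps `γ ↦ D_t(γ_t)` and `γ ↦ D(γ) = Σ_t D_t(γ_t)`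
are `σ(ca¹(Ω), E)`-lower semicontinuous; and if `dom(D_t) ⊆ Prob¹(K̃_t)` for all `t`,
then the induced concave functionals satisfy `U(φ) = Σ_t U_t(φ_t)` and
`S^U(φ) = Σ_t S^{U_t}(φ_t)` on `E`. -/
theorem additive_D_lsc_and_additive_U
    {T d : ℕ} (hT : 1 ≤ T) (hd : 1 ≤ d)
    (K : Fin (T + 1) → Fin d → Set ℝ)
    (hK_ne : ∀ t j, (K t j).Nonempty) (hK_cl : ∀ t j, IsClosed (K t j))
    (E : (t : Fin (T + 1)) → Set (Fiber K t → ℝ))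
    (hE_sub : ∀ t, ∀ φ ∈ E t, memCt K t φ)
    (hE_zero : ∀ t, (fun _ => (0 : ℝ)) ∈ E t)
    (hE_add : ∀ t, ∀ φ ∈ E t, ∀ ψ ∈ E t, φ + ψ ∈ E t)
    (hE_smul : ∀ t (r : ℝ), ∀ φ ∈ E t, r • φ ∈ E t)
    (hE_const : ∀ t, ∀ φ ∈ E t, ∀ r : ℝ, (fun v => φ v + r) ∈ E t)
    (Dt : (t : Fin (T + 1)) → SignedMeasure (Fiber K t) → EReal)
    (hDt_ne_bot : ∀ t γ, Dt t γ ≠ ⊥)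
    (hDt_proper : ∀ t, ∃ γ, ca1Fib K t γ ∧ Dt t γ ≠ ⊤)
    (hDt_convex : ∀ t, ∀ γ₁ γ₂ : SignedMeasure (Fiber K t),
      ca1Fib K t γ₁ → ca1Fib K t γ₂ → ∀ a : ℝ, 0 ≤ a → a ≤ 1 →
        Dt t (a • γ₁ + (1 - a) • γ₂) ≤
          (a : EReal) * Dt t γ₁ + ((1 - a : ℝ) : EReal) * Dt t γ₂)
    (hDt_lsc : ∀ t, @LowerSemicontinuous _ EReal (fibTop K t (E t)) _
      (fun γ : { γ : SignedMeasure (Fiber K t) // ca1Fib K t γ } => Dt t γ.1)) :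
    ((∀ t, @LowerSemicontinuous _ EReal (pathTop K E) _
        (fun γ : { γ : SignedMeasure (PathSpace K) // ca1 K γ } =>
          Dt t (smarg K t γ.1))) ∧
      @LowerSemicontinuous _ EReal (pathTop K E) _
        (fun γ : { γ : SignedMeasure (PathSpace K) // ca1 K γ } =>
          ∑ t, Dt t (smarg K t γ.1))) ∧
    ((∀ t (γ : SignedMeasure (Fiber K t)), Dt t γ ≠ ⊤ →
        0 ≤ γ ∧ γ Set.univ = 1 ∧ ca1Fib K t γ) →
      ∀ φ : (t : Fin (T + 1)) → Fiber K t → ℝ, memE2 K E φ →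
        UOf K Dt φ = ∑ t, UtOf K t (Dt t) (φ t) ∧
        SUprod K (UOf K Dt) φ = ∑ t, SUt K t (UtOf K t (Dt t)) (φ t)) := by
  classical
  have hcont : ∀ t : Fin (T + 1), @Continuous _ _ (pathTop K E) (fibTop K t (E t))
      (fun γ : { γ : SignedMeasure (PathSpace K) // ca1 K γ } =>
        (⟨smarg K t γ.1, ca1Fib_smarg K γ.2 t⟩ :
          { γ' : SignedMeasure (Fiber K t) // ca1Fib K t γ' })) := by
    intro t
    letI := pathTop K E
    letI := fibTop K t (E t)
    have hH : @Continuous _ _ (pathTop K E) _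
        (fun γ : { γ : SignedMeasure (PathSpace K) // ca1 K γ } =>
          fun p : (s : Fin (T + 1)) × { φ : Fiber K s → ℝ // φ ∈ E s } =>
            sInt (smarg K p.1 γ.1) p.2.1) :=
      continuous_induced_dom
    refine continuous_induced_rng.2 ?_
    refine continuous_pi fun φ => ?_
    exact (continuous_apply
      (⟨t, φ⟩ : (s : Fin (T + 1)) × { φ : Fiber K s → ℝ // φ ∈ E s })).comp hH
  have hlsc : ∀ t : Fin (T + 1), @LowerSemicontinuous _ EReal (pathTop K E) _
      (fun γ : { γ : SignedMeasure (PathSpace K) // ca1 K γ } => Dt t (smarg K t γ.1)) := by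
    intro t
    letI := pathTop K E
    letI := fibTop K t (E t)
    exact EMOTAux.lsc_comp
      (f := fun p : { γ' : SignedMeasure (Fiber K t) // ca1Fib K t γ' } => Dt t p.1)
      (hDt_lsc t) (hcont t)
  refine ⟨⟨hlsc, ?_⟩, ?_⟩
  · letI := pathTop K E
    exact EMOTAux.lsc_sum Finset.univ (fun t (γ : { γ : SignedMeasure (PathSpace K) // ca1 K γ }) => Dt t (smarg K t γ.1))
      (fun t => hlsc t) (fun t γ => hDt_ne_bot t _)
  · intro hdom φ hφ
    have hU : ∀ ψ : (t : Fin (T + 1)) → Fiber K t → ℝ,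
        UOf K Dt ψ = ∑ t, UtOf K t (Dt t) (ψ t) := by
      intro ψ
      rw [UOf, Vprod_eq_sum K Dt hDt_ne_bot hdom (fun t v => -(ψ t v)),
        EMOTAux.ereal_neg_sum Finset.univ _
          (fun t => Vt_ne_bot K t (Dt t) (hDt_ne_bot t) (hDt_proper t) _)]
      rfl
    refine ⟨hU φ, ?_⟩
    have h1 : ∀ β : Fin (T + 1) → ℝ,
        UOf K Dt (fun t v => φ t v + β t) - ((∑ t, β t : ℝ) : EReal)
          = ∑ t, (UtOf K t (Dt t) (fun v => φ t v + β t) - ((β t : ℝ) : EReal)) := by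
      intro β
      rw [hU, EMOTAux.ereal_sum_sub_coe]
    calc SUprod K (UOf K Dt) φ
        = ⨆ β : Fin (T + 1) → ℝ,
            ∑ t, (UtOf K t (Dt t) (fun v => φ t v + β t) - ((β t : ℝ) : EReal)) :=
          iSup_congr h1
      _ = ∑ t, ⨆ α : ℝ, (UtOf K t (Dt t) (fun v => φ t v + α) - ((α : ℝ) : EReal)) :=
          (EMOTAux.ereal_sum_iSup
            (fun t (α : ℝ) => UtOf K t (Dt t) (fun v => φ t v + α) - ((α : ℝ) : EReal))
            Finset.univ).symm
      _ = ∑ t, SUt K t (UtOf K t (Dt t)) (φ t) := rfl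

end EMOT
end
end

section
/- Under Assumption aU1 and the compact standing assumption, for each t = 0,…,T the functional U_{Q̂_t}(φ_t) := sup_{α,λ ∈ ℝ} ( ∫_{K_t} u_t( φ_t(x) + α x + λ ) dQ̂_t(x) − (α x_0 + λ) ) satisfies: (1) U_{Q̂_t} is real valued on C_b(K_t) and U_{Q̂_t}(0) = 0; (2) U_{Q̂_t} is concave and nondecreasing; (3) U_{Q̂_t} is stock additive: U_{Q̂_t}(φ_t + α_t X_t + λ_t) = U_{Q̂_t}(φ_t) + α_t x_0 + λ_t for every φ_t ∈ C_b(K_t) and α_t, λ_t ∈ ℝ, where X_t denotes the identity function x ↦ x on K_t. -/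
open MeasureTheory Filter Topology
open scoped ENNReal BigOperators Classical

noncomputable section

namespace EMOT

variable {T : ℕ}

/-- The path space `Ω = K_0 × … × K_T` (one-dimensional case `d = 1`). -/
abbrev Traj (K : Fin (T + 1) → Set ℝ) : Type :=
  { x : Fin (T + 1) → ℝ // ∀ t, x t ∈ K t }

/-- The set `K_t` viewed as a type. -/
abbrev Pt (K : Fin (T + 1) → Set ℝ) (t : Fin (T + 1)) : Type := { a : ℝ // a ∈ K t }

variable (K : Fin (T + 1) → Set ℝ)

/-- The time-`t` projection. -/
def prj (t : Fin (T + 1)) (x : Traj K) : Pt K t := ⟨x.1 t, x.2 t⟩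

/-- Admissible dynamic strategies `H`: bounded continuous adapted integrands. -/
def Adap (Δ : Fin T → Traj K → ℝ) : Prop :=
  ∀ t : Fin T, Continuous (Δ t) ∧ (∃ M : ℝ, ∀ x, |Δ t x| ≤ M) ∧
    ∀ x y : Traj K, (∀ s : Fin (T + 1), s ≤ t.castSucc → x.1 s = y.1 s) →
      Δ t x = Δ t y

/-- The elementary stochastic integral `I^Δ`. -/
def IInt (Δ : Fin T → Traj K → ℝ) (x : Traj K) : ℝ :=
  ∑ t : Fin T, Δ t x * (x.1 t.succ - x.1 t.castSucc)

/-- The martingale measures on `Ω`. -/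
def MartT (Q : Measure (Traj K)) : Prop :=
  IsProbabilityMeasure Q ∧ ∀ Δ, Adap K Δ → ∫ x, IInt K Δ x ∂Q = 0

/-- The `t`-th marginal of a measure on `Ω`. -/
def margT (t : Fin (T + 1)) (Q : Measure (Traj K)) : Measure (Pt K t) :=
  Q.map (prj K t)

/-- Membership in `C_b(K_t)`. -/
def memCb (t : Fin (T + 1)) (φ : Pt K t → ℝ) : Prop :=
  Continuous φ ∧ ∃ M : ℝ, ∀ a, |φ a| ≤ M

/-- The functional `U_{Q̂_t}` built from a utility `u : ℝ → [-∞,+∞)`,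
`U_{Q̂_t}(φ) = sup_{α,λ} ( ∫ u(φ(x) + αx + λ) dQ̂_t - (α x₀ + λ) )`. -/
def UQ (Qhat : Measure (Traj K)) (u : ℝ → EReal) (x₀ : ℝ) (t : Fin (T + 1))
    (φ : Pt K t → ℝ) : EReal :=
  ⨆ (α : ℝ) (l : ℝ),
    (eInt (margT K t Qhat) (fun a => u (φ a + α * a.1 + l)) -
      ((α * x₀ + l : ℝ) : EReal))

lemma posPart_zero : posPart 0 = 0 := by simp [posPart]

lemma posPart_coe (r : ℝ) : posPart (r : EReal) = ENNReal.ofReal r := by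
  simp [posPart, EReal.coe_ne_top]

lemma posPart_bot : posPart ⊥ = 0 := by simp [posPart]

lemma posPart_mono : Monotone posPart := by
  intro a b h
  rcases eq_or_ne b ⊤ with hb | hb
  · simp [posPart, hb]
  rcases eq_or_ne a ⊥ with ha | ha
  · simp [ha, posPart_bot]
  · have ha' : a ≠ ⊤ := fun h' => hb (top_le_iff.1 (h' ▸ h))
    simp only [posPart, if_neg ha', if_neg hb]
    exact ENNReal.ofReal_le_ofReal (EReal.toReal_le_toReal h ha hb)

lemma posPart_le_ofReal {a : EReal} {C : ℝ} (h : a ≤ (C : EReal)) :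
    posPart a ≤ ENNReal.ofReal C := by
  simpa [posPart_coe] using posPart_mono h

variable {X : Type} [MeasurableSpace X] {μ : Measure X}

lemma eInt_zero : eInt μ (fun _ => (0 : EReal)) = 0 := by
  simp [eInt, posPart_zero]

lemma eInt_mono_ae {f g : X → EReal} (h : ∀ᵐ x ∂μ, f x ≤ g x) :
    eInt μ f ≤ eInt μ g := by
  refine EReal.sub_le_sub ?_ ?_
  · exact EReal.coe_ennreal_le_coe_ennreal_iff.2 <|
      lintegral_mono_ae (h.mono fun x hx => posPart_mono hx)
  · exact EReal.coe_ennreal_le_coe_ennreal_iff.2 <|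
      lintegral_mono_ae (h.mono fun x hx => posPart_mono (EReal.neg_le_neg_iff.2 hx))

lemma eInt_congr_ae {f g : X → EReal} (h : f =ᵐ[μ] g) : eInt μ f = eInt μ g :=
  le_antisymm (eInt_mono_ae (h.mono fun _ hx => hx.le))
    (eInt_mono_ae (h.mono fun _ hx => hx.ge))

lemma ennreal_coe_eq {x : ℝ≥0∞} (h : x ≠ ⊤) :
    ((x : EReal)) = ((x.toReal : ℝ) : EReal) := by
  rw [← EReal.toReal_coe_ennreal, EReal.coe_toReal]
  · simpa [EReal.coe_ennreal_eq_top_iff] using h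
  · exact (EReal.coe_ennreal_strictMono.monotone (zero_le : (0 : ℝ≥0∞) ≤ x)).trans_lt' (by simp) |>.ne'

lemma eInt_coe {g : X → ℝ} (hg : Integrable g μ) :
    eInt μ (fun x => (g x : EReal)) = ((∫ x, g x ∂μ : ℝ) : EReal) := by
  have hP : (∫⁻ x, posPart ((g x : EReal)) ∂μ) = ∫⁻ x, ENNReal.ofReal (g x) ∂μ := by
    simp [posPart_coe]
  have hN : (∫⁻ x, posPart (-(g x : EReal)) ∂μ) = ∫⁻ x, ENNReal.ofReal (-(g x)) ∂μ := by
    refine lintegral_congr fun x => ?_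
    rw [← EReal.coe_neg, posPart_coe]
  have hPfin : (∫⁻ x, ENNReal.ofReal (g x) ∂μ) ≠ ⊤ :=
    ((lintegral_ofReal_le_lintegral_enorm g).trans_lt hg.2).ne
  have hNfin : (∫⁻ x, ENNReal.ofReal (-(g x)) ∂μ) ≠ ⊤ :=
    ((lintegral_ofReal_le_lintegral_enorm _).trans_lt hg.neg.2).ne
  rw [eInt, hP, hN, ennreal_coe_eq hPfin, ennreal_coe_eq hNfin]
  rw [show ((((∫⁻ x, ENNReal.ofReal (g x) ∂μ).toReal : ℝ) : EReal) -
      (((∫⁻ x, ENNReal.ofReal (-(g x)) ∂μ).toReal : ℝ) : EReal)) =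
      ((((∫⁻ x, ENNReal.ofReal (g x) ∂μ).toReal -
        (∫⁻ x, ENNReal.ofReal (-(g x)) ∂μ).toReal : ℝ)) : EReal) from rfl]
  exact congrArg Real.toEReal (integral_eq_lintegral_pos_part_sub_lintegral_neg_part hg).symm






lemma ennreal_coe_ne_bot (N : ℝ≥0∞) : (N : EReal) ≠ ⊥ := by
  intro h
  have h0 : (0 : EReal) ≤ (N : EReal) := by
    rw [← EReal.coe_ennreal_zero]
    exact EReal.coe_ennreal_le_coe_ennreal_iff.2 (zero_le : (0 : ℝ≥0∞) ≤ N)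
  rw [h, le_bot_iff] at h0
  exact EReal.zero_ne_bot h0

lemma posPart_eq_top_iff {a : EReal} : posPart a = ⊤ ↔ a = ⊤ := by
  unfold posPart; split <;> simp_all [ENNReal.ofReal_ne_top]

lemma measurable_posPart : Measurable posPart := posPart_mono.measurable

variable {X : Type} [MeasurableSpace X] {μ : Measure X}

lemma eInt_ne_top {f : X → EReal} {C : ℝ} [IsFiniteMeasure μ] (hC : ∀ x, f x ≤ (C : EReal)) :
    eInt μ f ≠ ⊤ ∧ (∫⁻ x, posPart (f x) ∂μ) ≠ ⊤ := by
  have hP : (∫⁻ x, posPart (f x) ∂μ) ≤ ENNReal.ofReal C * μ Set.univ := by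
    rw [← lintegral_const]
    exact lintegral_mono fun x => posPart_le_ofReal (hC x)
  have hPfin : (∫⁻ x, posPart (f x) ∂μ) ≠ ⊤ :=
    (hP.trans_lt (ENNReal.mul_lt_top ENNReal.ofReal_lt_top (measure_lt_top μ _))).ne
  refine ⟨?_, hPfin⟩
  rw [eInt, sub_eq_add_neg]
  refine (EReal.add_lt_top ?_ ?_).ne
  · simp [EReal.coe_ennreal_eq_top_iff, hPfin]
  · intro h
    rw [EReal.neg_eq_top_iff] at h
    exact ennreal_coe_ne_bot _ h

lemma eInt_eq_integral {f : X → EReal} (hf : Measurable f) (hftop : ∀ x, f x ≠ ⊤)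
    (hPfin : (∫⁻ x, posPart (f x) ∂μ) ≠ ⊤) (hNfin : (∫⁻ x, posPart (-f x) ∂μ) ≠ ⊤) :
    (∀ᵐ x ∂μ, f x ≠ ⊥) ∧ Integrable (fun x => (f x).toReal) μ ∧
      eInt μ f = ((∫ x, (f x).toReal ∂μ : ℝ) : EReal) := by
  have hmeasN : Measurable fun x => posPart (-f x) := measurable_posPart.comp hf.neg
  have hae : ∀ᵐ x ∂μ, f x ≠ ⊥ := by
    filter_upwards [ae_lt_top hmeasN hNfin] with x hx
    intro hbot
    rw [hbot] at hx
    simp [posPart] at hx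
  have hint : Integrable (fun x => (f x).toReal) μ := by
    refine ⟨(measurable_ereal_toReal.comp hf).aestronglyMeasurable, ?_⟩
    have hbd : ∀ x, (‖(f x).toReal‖₊ : ℝ≥0∞) ≤ posPart (f x) + posPart (-f x) := by
      intro x
      rcases eq_or_ne (f x) ⊥ with hb | hb
      · simp [hb]
      · have hx' := hftop x
        rw [show ((‖(f x).toReal‖₊ : ℝ≥0∞)) = ENNReal.ofReal |(f x).toReal| from Real.enorm_eq_ofReal_abs _]
        rcases le_or_gt 0 (f x).toReal with h0 | h0
        · rw [abs_of_nonneg h0]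
          refine le_add_of_le_of_nonneg ?_ zero_le
          simp [posPart, hx']
        · rw [abs_of_neg h0]
          refine le_add_of_nonneg_of_le zero_le ?_
          have : -f x ≠ ⊤ := by simpa [EReal.neg_eq_top_iff] using hb
          simp only [posPart, if_neg this, EReal.toReal_neg_eq]
          exact le_of_eq rfl
    calc (∫⁻ x, (‖(f x).toReal‖₊ : ℝ≥0∞) ∂μ) ≤ ∫⁻ x, (posPart (f x) + posPart (-f x)) ∂μ :=
          lintegral_mono hbd
      _ = (∫⁻ x, posPart (f x) ∂μ) + ∫⁻ x, posPart (-f x) ∂μ :=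
          lintegral_add_left (measurable_posPart.comp hf) _
      _ < ⊤ := ENNReal.add_lt_top.2 ⟨hPfin.lt_top, hNfin.lt_top⟩
  refine ⟨hae, hint, ?_⟩
  have hcongr : f =ᵐ[μ] fun x => (((f x).toReal : ℝ) : EReal) := by
    filter_upwards [hae] with x hx
    exact (EReal.coe_toReal (hftop x) hx).symm
  rw [eInt_congr_ae hcongr, eInt_coe hint]

lemma add_le_add_right' {a b : EReal} (h : a ≤ b) (c : EReal) : a + c ≤ b + c :=
  add_le_add h le_rfl

lemma iSup_add_const {ι : Sort*} [Nonempty ι] (f : ι → EReal) (r : ℝ) :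
    (⨆ i, (f i + (r : EReal))) = (⨆ i, f i) + (r : EReal) := by
  refine le_antisymm (iSup_le fun i => add_le_add_right' (le_iSup f i) _) ?_
  have : (⨆ i, f i) ≤ (⨆ i, (f i + (r : EReal))) - (r : EReal) := by
    refine iSup_le fun i => ?_
    rw [EReal.le_sub_iff_add_le (Or.inl (EReal.coe_ne_bot r)) (Or.inl (EReal.coe_ne_top r))]
    exact le_iSup (fun i => f i + (r : EReal)) i
  calc (⨆ i, f i) + (r : EReal)
      ≤ ((⨆ i, (f i + (r : EReal))) - (r : EReal)) + (r : EReal) := add_le_add_right' this _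
    _ = ⨆ i, (f i + (r : EReal)) := EReal.sub_add_cancel






variable {X : Type} [MeasurableSpace X] {μ : Measure X}

lemma eInt_eq_bot {f : X → EReal} (hNf : (∫⁻ x, posPart (-f x) ∂μ) = ⊤) :
    eInt μ f = ⊥ := by
  rw [eInt, hNf, EReal.coe_ennreal_top, EReal.sub_top]

lemma eInt_concave [IsProbabilityMeasure μ] {f g h : X → EReal}
    (hf : Measurable f) (hg : Measurable g)
    {C : ℝ} (hfC : ∀ x, f x ≤ (C : EReal)) (hgC : ∀ x, g x ≤ (C : EReal))
    {a : ℝ} (ha : 0 < a) (ha1 : a < 1)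
    (hpt : ∀ x, (a : EReal) * f x + ((1 - a : ℝ) : EReal) * g x ≤ h x) :
    (a : EReal) * eInt μ f + ((1 - a : ℝ) : EReal) * eInt μ g ≤ eInt μ h := by
  have ha1' : (0 : ℝ) < 1 - a := by linarith
  have hfT : ∀ x, f x ≠ ⊤ := fun x => ((hfC x).trans_lt (EReal.coe_lt_top C)).ne
  have hgT : ∀ x, g x ≠ ⊤ := fun x => ((hgC x).trans_lt (EReal.coe_lt_top C)).ne
  obtain ⟨-, hPf⟩ := eInt_ne_top (μ := μ) hfC
  obtain ⟨-, hPg⟩ := eInt_ne_top (μ := μ) hgC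
  by_cases hNf : (∫⁻ x, posPart (-f x) ∂μ) = ⊤
  · rw [eInt_eq_bot hNf, EReal.coe_mul_bot_of_pos ha, EReal.bot_add]
    exact bot_le
  by_cases hNg : (∫⁻ x, posPart (-g x) ∂μ) = ⊤
  · rw [eInt_eq_bot hNg, EReal.coe_mul_bot_of_pos ha1', EReal.add_bot]
    exact bot_le
  obtain ⟨haef, hintf, heqf⟩ := eInt_eq_integral hf hfT hPf hNf
  obtain ⟨haeg, hintg, heqg⟩ := eInt_eq_integral hg hgT hPg hNg
  set F : X → ℝ := fun x => (f x).toReal with hF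
  set G : X → ℝ := fun x => (g x).toReal with hG
  have hcombo : ∀ᵐ x ∂μ, (((a * F x + (1 - a) * G x : ℝ)) : EReal) ≤ h x := by
    filter_upwards [haef, haeg] with x hfx hgx
    have h1 : f x = ((F x : ℝ) : EReal) := (EReal.coe_toReal (hfT x) hfx).symm
    have h2 : g x = ((G x : ℝ) : EReal) := (EReal.coe_toReal (hgT x) hgx).symm
    calc (((a * F x + (1 - a) * G x : ℝ)) : EReal)
        = (a : EReal) * f x + ((1 - a : ℝ) : EReal) * g x := by
          rw [h1, h2]; norm_cast
      _ ≤ h x := hpt x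
  have hintc : Integrable (fun x => a * F x + (1 - a) * G x) μ :=
    (hintf.const_mul a).add (hintg.const_mul (1 - a))
  calc (a : EReal) * eInt μ f + ((1 - a : ℝ) : EReal) * eInt μ g
      = (((a * ∫ x, F x ∂μ + (1 - a) * ∫ x, G x ∂μ : ℝ)) : EReal) := by
        rw [heqf, heqg]; norm_cast
    _ = ((∫ x, (a * F x + (1 - a) * G x) ∂μ : ℝ) : EReal) := by
        rw [integral_add (hintf.const_mul a) (hintg.const_mul (1 - a)),
          integral_const_mul, integral_const_mul]
    _ = eInt μ (fun x => (((a * F x + (1 - a) * G x : ℝ)) : EReal)) := (eInt_coe hintc).symm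
    _ ≤ eInt μ h := eInt_mono_ae hcombo

lemma combo_sub_eq {a : ℝ} (ha : 0 < a) (ha1 : a < 1) {A B : EReal}
    (hA : A ≠ ⊤) (hB : B ≠ ⊤) (c₁ c₂ : ℝ) :
    (a : EReal) * (A - (c₁ : EReal)) + ((1 - a : ℝ) : EReal) * (B - (c₂ : EReal)) =
      ((a : EReal) * A + ((1 - a : ℝ) : EReal) * B) - ((a * c₁ + (1 - a) * c₂ : ℝ) : EReal) := by
  have ha1' : (0 : ℝ) < 1 - a := by linarith
  induction A with
  | bot =>
    rw [EReal.bot_sub, EReal.coe_mul_bot_of_pos ha, EReal.bot_add, EReal.bot_add, EReal.bot_sub]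
  | coe A =>
    induction B with
    | bot =>
      rw [EReal.bot_sub, EReal.coe_mul_bot_of_pos ha1', EReal.add_bot, EReal.add_bot,
        EReal.bot_sub]
    | coe B => norm_cast; ring
    | top => exact absurd rfl hB
  | top => exact absurd rfl hA




instance : BorelSpace (Traj K) :=
  Subtype.borelSpace {x : Fin (T + 1) → ℝ | ∀ t, x t ∈ K t}

instance (t : Fin (T + 1)) : BorelSpace (Pt K t) :=
  Subtype.borelSpace (K t)

lemma continuous_prj (t : Fin (T + 1)) : Continuous (prj K t) :=
  Continuous.subtype_mk ((continuous_apply t).comp continuous_subtype_val) _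

lemma measurable_prj (t : Fin (T + 1)) : Measurable (prj K t) :=
  (continuous_prj K t).measurable

lemma isProb_margT (Qhat : Measure (Traj K)) [IsProbabilityMeasure Qhat] (t : Fin (T + 1)) :
    IsProbabilityMeasure (margT K t Qhat) :=
  Measure.isProbabilityMeasure_map (measurable_prj K t).aemeasurable

lemma integrable_of_bdd {Y : Type} [MeasurableSpace Y] [TopologicalSpace Y]
    [OpensMeasurableSpace Y] {μ : Measure Y} [IsFiniteMeasure μ] {φ : Y → ℝ}
    (hc : Continuous φ) {M : ℝ} (hb : ∀ a, |φ a| ≤ M) : Integrable φ μ :=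
  ⟨hc.aestronglyMeasurable, HasFiniteIntegral.of_bounded
    (Filter.Eventually.of_forall (by simpa [Real.norm_eq_abs] using hb))⟩

lemma K_bound (hKcpt : ∀ t, IsCompact (K t)) (t : Fin (T + 1)) :
    ∃ C : ℝ, 0 ≤ C ∧ ∀ a ∈ K t, |a| ≤ C := by
  obtain ⟨C, hC⟩ := (hKcpt t).isBounded.subset_closedBall 0
  refine ⟨max C 0, le_max_right _ _, fun a ha => ?_⟩
  have := hC ha
  rw [Metric.mem_closedBall, Real.dist_eq, sub_zero] at this
  exact this.trans (le_max_left _ _)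

lemma integral_proj_eq (x₀ : ℝ) (hK0 : K 0 = {x₀}) (hKcpt : ∀ t, IsCompact (K t))
    {Qhat : Measure (Traj K)} (hQhat : MartT K Qhat) (t : Fin (T + 1)) :
    ∫ x, x.1 t ∂Qhat = x₀ := by
  haveI := hQhat.1
  have hint : ∀ s : Fin (T + 1), Integrable (fun x : Traj K => x.1 s) Qhat := by
    intro s
    obtain ⟨C, -, hC⟩ := K_bound K hKcpt s
    exact integrable_of_bdd ((continuous_apply s).comp continuous_subtype_val)
      (fun x => hC _ (x.2 s))
  have hstep : ∀ s : Fin T, ∫ x, x.1 s.succ ∂Qhat = ∫ x, x.1 s.castSucc ∂Qhat := by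
    intro s
    have hAdap : Adap K (fun s' (_ : Traj K) => if s' = s then (1 : ℝ) else 0) := by
      intro t'
      exact ⟨continuous_const, ⟨1, fun x => by dsimp only; split <;> simp⟩, fun x y _ => rfl⟩
    have hI : ∀ x : Traj K, IInt K (fun s' _ => if s' = s then (1 : ℝ) else 0) x
        = x.1 s.succ - x.1 s.castSucc := by
      intro x
      rw [IInt, Finset.sum_eq_single s]
      · simp
      · intro b _ hb; simp [hb]
      · simp
    have h0 : ∫ x, (x.1 s.succ - x.1 s.castSucc) ∂Qhat = 0 := by
      rw [← hQhat.2 _ hAdap]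
      exact integral_congr_ae (Filter.Eventually.of_forall fun x => (hI x).symm)
    rw [integral_sub (hint _) (hint _), sub_eq_zero] at h0
    exact h0
  induction t using Fin.induction with
  | zero =>
    have hz : ∀ x : Traj K, x.1 0 = x₀ := fun x => by
      have := x.2 0; rw [hK0] at this; exact this
    simp only [hz]
    simp [integral_const]
  | succ s ih => rw [hstep s, ih]

lemma integral_margT {Qhat : Measure (Traj K)} (hQhat : MartT K Qhat) (t : Fin (T + 1))
    (g : Pt K t → ℝ) (hg : AEStronglyMeasurable g (margT K t Qhat)) :
    ∫ a, g a ∂(margT K t Qhat) = ∫ x, g (prj K t x) ∂Qhat := by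
  haveI := hQhat.1
  exact integral_map (measurable_prj K t).aemeasurable hg

lemma integral_margT_val (x₀ : ℝ) (hK0 : K 0 = {x₀}) (hKcpt : ∀ t, IsCompact (K t))
    {Qhat : Measure (Traj K)} (hQhat : MartT K Qhat) (t : Fin (T + 1)) :
    ∫ a : Pt K t, (a.1 : ℝ) ∂(margT K t Qhat) = x₀ := by
  rw [integral_margT K hQhat t _ continuous_subtype_val.aestronglyMeasurable]
  exact integral_proj_eq K x₀ hK0 hKcpt hQhat t


lemma sub_coe_add_coe (X : EReal) (c r : ℝ) :
    (X - (c : ℝ)) + (r : ℝ) = X - ((c - r : ℝ) : EReal) := by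
  induction X with
  | bot => rw [EReal.bot_sub, EReal.bot_add, EReal.bot_sub]
  | coe X => norm_cast; ring
  | top => rw [EReal.top_sub_coe, EReal.top_add_coe, EReal.top_sub_coe]

lemma arg_continuous {t : Fin (T + 1)} {φ : Pt K t → ℝ} (hφ : Continuous φ) (α l : ℝ) :
    Continuous (fun a : Pt K t => φ a + α * a.1 + l) :=
  (hφ.add (continuous_const.mul continuous_subtype_val)).add continuous_const

lemma arg_bound {t : Fin (T + 1)} {φ : Pt K t → ℝ} {M C : ℝ}
    (hM : ∀ a, |φ a| ≤ M) (hC : ∀ a ∈ K t, |a| ≤ C) (α l : ℝ) (a : Pt K t) :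
    |φ a + α * a.1 + l| ≤ M + |α| * C + |l| := by
  have h1 : |α * a.1| ≤ |α| * C := by
    rw [abs_mul]
    exact mul_le_mul_of_nonneg_left (hC _ a.2) (abs_nonneg α)
  calc |φ a + α * a.1 + l| ≤ |φ a + α * a.1| + |l| := abs_add_le _ _
    _ ≤ (|φ a| + |α * a.1|) + |l| := by gcongr; exact abs_add_le _ _
    _ ≤ M + |α| * C + |l| := add_le_add (add_le_add (hM a) h1) le_rfl

lemma integral_arg (x₀ : ℝ) (hK0 : K 0 = {x₀}) (hKcpt : ∀ t, IsCompact (K t))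
    {Qhat : Measure (Traj K)} (hQhat : MartT K Qhat) (t : Fin (T + 1))
    {φ : Pt K t → ℝ} (hφ : memCb K t φ) (α l : ℝ) :
    ∫ a, (φ a + α * a.1 + l) ∂(margT K t Qhat) =
      (∫ a, φ a ∂(margT K t Qhat)) + (α * x₀ + l) := by
  haveI := hQhat.1
  haveI := isProb_margT K Qhat t
  obtain ⟨C, hC0, hC⟩ := K_bound K hKcpt t
  obtain ⟨M, hM⟩ := hφ.2
  have hφi : Integrable φ (margT K t Qhat) := integrable_of_bdd hφ.1 hM
  have hvi : Integrable (fun a : Pt K t => (a.1 : ℝ)) (margT K t Qhat) :=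
    integrable_of_bdd continuous_subtype_val (fun a => hC _ a.2)
  have hsum : Integrable (fun a : Pt K t => φ a + α * a.1) (margT K t Qhat) :=
    hφi.add (hvi.const_mul α)
  rw [integral_add hsum (integrable_const l),
    integral_add hφi (hvi.const_mul α), integral_const_mul, integral_const,
    integral_margT_val K x₀ hK0 hKcpt hQhat t]
  simp [measure_univ]
  ring

lemma UQ_le_integral (x₀ : ℝ) (hK0 : K 0 = {x₀}) (hKcpt : ∀ t, IsCompact (K t))
    {Qhat : Measure (Traj K)} (hQhat : MartT K Qhat) (t : Fin (T + 1))
    {u : ℝ → EReal} (hle : ∀ x : ℝ, u x ≤ (x : EReal))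
    {φ : Pt K t → ℝ} (hφ : memCb K t φ) :
    UQ K Qhat u x₀ t φ ≤ ((∫ a, φ a ∂(margT K t Qhat) : ℝ) : EReal) := by
  haveI := hQhat.1
  haveI := isProb_margT K Qhat t
  obtain ⟨C, hC0, hC⟩ := K_bound K hKcpt t
  obtain ⟨M, hM⟩ := hφ.2
  refine iSup_le fun α => iSup_le fun l => ?_
  have hint : Integrable (fun a : Pt K t => φ a + α * a.1 + l) (margT K t Qhat) :=
    integrable_of_bdd (arg_continuous K hφ.1 α l) (arg_bound K hM hC α l)
  have h1 : eInt (margT K t Qhat) (fun a => u (φ a + α * a.1 + l)) ≤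
      ((∫ a, (φ a + α * a.1 + l) ∂(margT K t Qhat) : ℝ) : EReal) := by
    rw [← eInt_coe hint]
    exact eInt_mono_ae (Filter.Eventually.of_forall fun a => hle _)
  rw [integral_arg K x₀ hK0 hKcpt hQhat t hφ α l] at h1
  calc eInt (margT K t Qhat) (fun a => u (φ a + α * a.1 + l)) - ((α * x₀ + l : ℝ) : EReal)
      ≤ (((∫ a, φ a ∂(margT K t Qhat)) + (α * x₀ + l) : ℝ) : EReal) - ((α * x₀ + l : ℝ) : EReal) :=
        EReal.sub_le_sub h1 le_rfl
    _ = ((∫ a, φ a ∂(margT K t Qhat) : ℝ) : EReal) := by norm_cast; ring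

lemma le_UQ (x₀ : ℝ) {Qhat : Measure (Traj K)} (hQhat : MartT K Qhat) (t : Fin (T + 1))
    {u : ℝ → EReal} (hmono : Monotone u) (hu0 : u 0 = 0)
    {φ : Pt K t → ℝ} {M : ℝ} (hM : ∀ a, |φ a| ≤ M) :
    ((-M : ℝ) : EReal) ≤ UQ K Qhat u x₀ t φ := by
  haveI := hQhat.1
  haveI := isProb_margT K Qhat t
  have hterm : ((-M : ℝ) : EReal) ≤
      eInt (margT K t Qhat) (fun a => u (φ a + 0 * a.1 + M)) - ((0 * x₀ + M : ℝ) : EReal) := by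
    have h0 : (0 : EReal) ≤ eInt (margT K t Qhat) (fun a => u (φ a + 0 * a.1 + M)) := by
      rw [← eInt_zero (μ := margT K t Qhat)]
      refine eInt_mono_ae (Filter.Eventually.of_forall fun a => ?_)
      rw [← hu0]
      refine hmono ?_
      have := (abs_le.1 (hM a)).1
      nlinarith [hM a]
    calc ((-M : ℝ) : EReal) = (0 : EReal) - ((0 * x₀ + M : ℝ) : EReal) := by norm_cast; ring
      _ ≤ _ := EReal.sub_le_sub h0 le_rfl
  exact hterm.trans (le_iSup₂ (f := fun (α : ℝ) (l : ℝ) =>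
    eInt (margT K t Qhat) (fun a => u (φ a + α * a.1 + l)) - ((α * x₀ + l : ℝ) : EReal)) 0 M)


lemma UQ_mono (x₀ : ℝ) (Qhat : Measure (Traj K)) (t : Fin (T + 1)) {u : ℝ → EReal}
    (hmono : Monotone u) {φ ψ : Pt K t → ℝ} (h : ∀ a, φ a ≤ ψ a) :
    UQ K Qhat u x₀ t φ ≤ UQ K Qhat u x₀ t ψ := by
  refine iSup_mono fun α => iSup_mono fun l => EReal.sub_le_sub ?_ le_rfl
  refine eInt_mono_ae (Filter.Eventually.of_forall fun a => hmono ?_)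
  have := h a
  linarith

lemma UQ_stock (Qhat : Measure (Traj K)) (u : ℝ → EReal) (x₀ : ℝ) (t : Fin (T + 1))
    (φ : Pt K t → ℝ) (αt lt : ℝ) :
    UQ K Qhat u x₀ t (fun a => φ a + αt * a.1 + lt) =
      UQ K Qhat u x₀ t φ + ((αt * x₀ + lt : ℝ) : EReal) := by
  set μ := margT K t Qhat with hμ
  set F : ℝ → ℝ → EReal := fun β m =>
    eInt μ (fun a => u (φ a + β * a.1 + m)) - ((β * x₀ + m : ℝ) : EReal) with hF
  have hterm : ∀ α l : ℝ,
      eInt μ (fun a => u ((φ a + αt * a.1 + lt) + α * a.1 + l)) - ((α * x₀ + l : ℝ) : EReal)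
        = F (α + αt) (l + lt) + ((αt * x₀ + lt : ℝ) : EReal) := by
    intro α l
    have harg : (fun a : Pt K t => u ((φ a + αt * a.1 + lt) + α * a.1 + l))
        = fun a => u (φ a + (α + αt) * a.1 + (l + lt)) := by
      funext a; congr 1; ring
    rw [harg, hF]
    rw [sub_coe_add_coe]
    congr 2
    ring
  have hstep1 : UQ K Qhat u x₀ t (fun a => φ a + αt * a.1 + lt)
      = ⨆ (α : ℝ) (l : ℝ), (F (α + αt) (l + lt) + ((αt * x₀ + lt : ℝ) : EReal)) := by
    rw [UQ]
    exact iSup_congr fun α => iSup_congr fun l => hterm α l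
  have hstep2 : (⨆ (α : ℝ) (l : ℝ), (F (α + αt) (l + lt) + ((αt * x₀ + lt : ℝ) : EReal)))
      = (⨆ (α : ℝ) (l : ℝ), F (α + αt) (l + lt)) + ((αt * x₀ + lt : ℝ) : EReal) := by
    rw [← iSup_add_const]
    exact iSup_congr fun α => iSup_add_const _ _
  have hstep3 : (⨆ (α : ℝ) (l : ℝ), F (α + αt) (l + lt)) = ⨆ (β : ℝ) (m : ℝ), F β m := by
    apply le_antisymm
    · exact iSup₂_le fun α l => le_iSup₂ (f := F) (α + αt) (l + lt)
    · refine iSup₂_le fun β m => ?_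
      have h := le_iSup₂ (f := fun (α : ℝ) (l : ℝ) => F (α + αt) (l + lt)) (β - αt) (m - lt)
      simpa [sub_add_cancel] using h
  rw [hstep1, hstep2, hstep3]
  rfl


lemma sub_coe_ne_top {X : EReal} (hX : X ≠ ⊤) (c : ℝ) : X - (c : ℝ) ≠ ⊤ := by
  rw [sub_eq_add_neg, ← EReal.coe_neg]
  exact (EReal.add_lt_top hX (EReal.coe_ne_top _)).ne

lemma UQ_concave (x₀ : ℝ) (hK0 : K 0 = {x₀}) (hKcpt : ∀ t, IsCompact (K t))
    {Qhat : Measure (Traj K)} (hQhat : MartT K Qhat) (t : Fin (T + 1)) {u : ℝ → EReal}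
    (hmono : Monotone u) (hu0 : u 0 = 0) (hle : ∀ x : ℝ, u x ≤ (x : EReal))
    (hconc : ∀ x y a : ℝ, 0 ≤ a → a ≤ 1 →
      (a : EReal) * u x + ((1 - a : ℝ) : EReal) * u y ≤ u (a * x + (1 - a) * y))
    {φ ψ : Pt K t → ℝ} (hφ : memCb K t φ) (hψ : memCb K t ψ)
    {a : ℝ} (h0 : 0 < a) (h1 : a < 1) :
    (a : EReal) * UQ K Qhat u x₀ t φ + ((1 - a : ℝ) : EReal) * UQ K Qhat u x₀ t ψ ≤
      UQ K Qhat u x₀ t (fun x => a * φ x + (1 - a) * ψ x) := by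
  haveI := hQhat.1
  haveI := isProb_margT K Qhat t
  set μ := margT K t Qhat with hμ
  have h1' : (0 : ℝ) < 1 - a := by linarith
  obtain ⟨C, hC0, hC⟩ := K_bound K hKcpt t
  obtain ⟨Mφ, hMφ⟩ := hφ.2
  obtain ⟨Mψ, hMψ⟩ := hψ.2
  set φ' : Pt K t → ℝ := fun x => a * φ x + (1 - a) * ψ x with hφ'def
  have hφ'cb : memCb K t φ' := by
    refine ⟨(continuous_const.mul hφ.1).add (continuous_const.mul hψ.1),
      ⟨a * Mφ + (1 - a) * Mψ, fun x => ?_⟩⟩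
    calc |a * φ x + (1 - a) * ψ x| ≤ |a * φ x| + |(1 - a) * ψ x| := abs_add_le _ _
      _ ≤ a * Mφ + (1 - a) * Mψ := by
          rw [abs_mul, abs_mul, abs_of_pos h0, abs_of_pos h1']
          exact add_le_add (mul_le_mul_of_nonneg_left (hMφ x) h0.le)
            (mul_le_mul_of_nonneg_left (hMψ x) h1'.le)
  -- each UQ is a real number
  have hreal : ∀ (χ : Pt K t → ℝ), memCb K t χ → ∀ M : ℝ, (∀ x, |χ x| ≤ M) →
      UQ K Qhat u x₀ t χ = (((UQ K Qhat u x₀ t χ).toReal : ℝ) : EReal) := by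
    intro χ hχ M hM
    refine (EReal.coe_toReal ?_ ?_).symm
    · exact fun h => by
        have := (UQ_le_integral K x₀ hK0 hKcpt hQhat t hle hχ)
        rw [h] at this
        exact (EReal.coe_ne_top _) (top_le_iff.1 this)
    · exact fun h => by
        have := le_UQ K x₀ hQhat t hmono hu0 hM
        rw [h, le_bot_iff] at this
        exact (EReal.coe_ne_bot _) this
  set rφ := (UQ K Qhat u x₀ t φ).toReal with hrφ
  set rψ := (UQ K Qhat u x₀ t ψ).toReal with hrψ
  set rφ' := (UQ K Qhat u x₀ t φ').toReal with hrφ'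
  have hUφ := hreal φ hφ Mφ hMφ
  have hUψ := hreal ψ hψ Mψ hMψ
  have hUφ' := hreal φ' hφ'cb _ hφ'cb.2.choose_spec
  rw [hUφ, hUψ, hUφ']
  have key : a * rφ + (1 - a) * rψ ≤ rφ' := by
    refine le_of_forall_pos_le_add fun ε hε => ?_
    -- extract near-optimal (α, l) for φ
    have hextract : ∀ (χ : Pt K t → ℝ), memCb K t χ →
        (((UQ K Qhat u x₀ t χ).toReal - ε : ℝ) : EReal) < UQ K Qhat u x₀ t χ → ∃ α l : ℝ,
        (((UQ K Qhat u x₀ t χ).toReal - ε : ℝ) : EReal) <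
          eInt μ (fun x => u (χ x + α * x.1 + l)) - ((α * x₀ + l : ℝ) : EReal) := by
      intro χ hχ hlt
      rw [UQ, lt_iSup_iff] at hlt
      obtain ⟨α, hα⟩ := hlt
      rw [lt_iSup_iff] at hα
      obtain ⟨l, hl⟩ := hα
      exact ⟨α, l, hl⟩
    have hltφ : ((rφ - ε : ℝ) : EReal) < UQ K Qhat u x₀ t φ := by
      rw [hUφ]; exact_mod_cast sub_lt_self rφ hε
    have hltψ : ((rψ - ε : ℝ) : EReal) < UQ K Qhat u x₀ t ψ := by
      rw [hUψ]; exact_mod_cast sub_lt_self rψ hε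
    obtain ⟨α, l, hTφ⟩ := hextract φ hφ hltφ
    obtain ⟨β, m, hTψ⟩ := hextract ψ hψ hltψ
    set Eφ := eInt μ (fun x => u (φ x + α * x.1 + l)) with hEφdef
    set Eψ := eInt μ (fun x => u (ψ x + β * x.1 + m)) with hEψdef
    have hbφ : ∀ x : Pt K t, u (φ x + α * x.1 + l) ≤ ((Mφ + |α| * C + |l| : ℝ) : EReal) :=
      fun x => (hle _).trans (EReal.coe_le_coe_iff.2
        ((le_abs_self _).trans (arg_bound K hMφ hC α l x)))
    have hbψ : ∀ x : Pt K t, u (ψ x + β * x.1 + m) ≤ ((Mψ + |β| * C + |m| : ℝ) : EReal) :=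
      fun x => (hle _).trans (EReal.coe_le_coe_iff.2
        ((le_abs_self _).trans (arg_bound K hMψ hC β m x)))
    have hEφtop : Eφ ≠ ⊤ := (eInt_ne_top hbφ).1
    have hEψtop : Eψ ≠ ⊤ := (eInt_ne_top hbψ).1
    set Tφ : EReal := Eφ - ((α * x₀ + l : ℝ) : EReal) with hTφdef
    set Tψ : EReal := Eψ - ((β * x₀ + m : ℝ) : EReal) with hTψdef
    have hTφtop : Tφ ≠ ⊤ := sub_coe_ne_top hEφtop _
    have hTψtop : Tψ ≠ ⊤ := sub_coe_ne_top hEψtop _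
    have hTφbot : Tφ ≠ ⊥ := fun h => by rw [h] at hTφ; exact absurd hTφ (by simp)
    have hTψbot : Tψ ≠ ⊥ := fun h => by rw [h] at hTψ; exact absurd hTψ (by simp)
    set sφ := Tφ.toReal with hsφdef
    set sψ := Tψ.toReal with hsψdef
    have hTφeq : Tφ = ((sφ : ℝ) : EReal) := (EReal.coe_toReal hTφtop hTφbot).symm
    have hTψeq : Tψ = ((sψ : ℝ) : EReal) := (EReal.coe_toReal hTψtop hTψbot).symm
    have hsφ : rφ - ε < sφ := by rw [hTφeq] at hTφ; exact_mod_cast hTφ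
    have hsψ : rψ - ε < sψ := by rw [hTψeq] at hTψ; exact_mod_cast hTψ
    -- the combined strategy
    set α'' := a * α + (1 - a) * β with hα''
    set l'' := a * l + (1 - a) * m with hl''
    set CC := max (Mφ + |α| * C + |l|) (Mψ + |β| * C + |m|) with hCC
    have hconcint : (a : EReal) * Eφ + ((1 - a : ℝ) : EReal) * Eψ ≤
        eInt μ (fun x => u (φ' x + α'' * x.1 + l'')) := by
      refine eInt_concave
        (hmono.measurable.comp (arg_continuous K hφ.1 α l).measurable)
        (hmono.measurable.comp (arg_continuous K hψ.1 β m).measurable)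
        (C := CC)
        (fun x => (hbφ x).trans (EReal.coe_le_coe_iff.2 (le_max_left _ _)))
        (fun x => (hbψ x).trans (EReal.coe_le_coe_iff.2 (le_max_right _ _)))
        h0 h1 (fun x => ?_)
      have harg : a * (φ x + α * x.1 + l) + (1 - a) * (ψ x + β * x.1 + m)
          = φ' x + α'' * x.1 + l'' := by simp only [hφ'def, hα'', hl'']; ring
      exact (hconc _ _ a h0.le h1.le).trans_eq (by rw [harg])
    have hkey2 : (a : EReal) * Tφ + ((1 - a : ℝ) : EReal) * Tψ ≤ UQ K Qhat u x₀ t φ' := by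
      rw [hTφdef, hTψdef, combo_sub_eq h0 h1 hEφtop hEψtop]
      have hc'' : (a * (α * x₀ + l) + (1 - a) * (β * x₀ + m) : ℝ) = α'' * x₀ + l'' := by
        rw [hα'', hl'']; ring
      rw [hc'']
      refine le_trans (EReal.sub_le_sub hconcint le_rfl) ?_
      exact le_iSup₂ (f := fun (γ : ℝ) (n : ℝ) =>
        eInt μ (fun x => u (φ' x + γ * x.1 + n)) - ((γ * x₀ + n : ℝ) : EReal)) α'' l''
    rw [hTφeq, hTψeq, hUφ'] at hkey2
    have hre : a * sφ + (1 - a) * sψ ≤ rφ' := by exact_mod_cast hkey2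
    nlinarith [mul_le_mul_of_nonneg_left hsφ.le h0.le,
      mul_le_mul_of_nonneg_left hsψ.le h1'.le]
  exact_mod_cast key

/-- Lemma `remfrominftytofiniteness`: under Assumption aU1 and the
compact standing assumption, each `U_{Q̂_t}` is real valued and null at `0`, concave and
nondecreasing, and stock additive on `C_b(K_t)`. -/
theorem UQ_real_concave_monotone_stockAdditive
    {T : ℕ} (hT : 1 ≤ T)
    (K : Fin (T + 1) → Set ℝ)
    (hKne : ∀ t, (K t).Nonempty) (hKcpt : ∀ t, IsCompact (K t))
    (x₀ : ℝ) (hK0 : K 0 = {x₀})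
    (Qhat : Measure (Traj K)) (hQhat : MartT K Qhat)
    (u : Fin (T + 1) → ℝ → EReal)
    (hu_ne_top : ∀ t x, u t x ≠ ⊤)
    (husc : ∀ t, UpperSemicontinuous (u t))
    (hmono : ∀ t, Monotone (u t))
    (hconc : ∀ t, ∀ x y a : ℝ, 0 ≤ a → a ≤ 1 →
      (a : EReal) * u t x + ((1 - a : ℝ) : EReal) * u t y ≤ u t (a * x + (1 - a) * y))
    (hu0 : ∀ t, u t 0 = 0) (hle : ∀ t (x : ℝ), u t x ≤ (x : EReal)) :
    ∀ t : Fin (T + 1),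
      ((∀ φ : Pt K t → ℝ, memCb K t φ →
          UQ K Qhat (u t) x₀ t φ ≠ ⊥ ∧ UQ K Qhat (u t) x₀ t φ ≠ ⊤) ∧
        UQ K Qhat (u t) x₀ t (fun _ => 0) = 0) ∧
      ((∀ φ ψ : Pt K t → ℝ, memCb K t φ → memCb K t ψ → (∀ a, φ a ≤ ψ a) →
          UQ K Qhat (u t) x₀ t φ ≤ UQ K Qhat (u t) x₀ t ψ) ∧
        (∀ φ ψ : Pt K t → ℝ, memCb K t φ → memCb K t ψ → ∀ a : ℝ, 0 ≤ a → a ≤ 1 →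
          (a : EReal) * UQ K Qhat (u t) x₀ t φ +
              ((1 - a : ℝ) : EReal) * UQ K Qhat (u t) x₀ t ψ ≤
            UQ K Qhat (u t) x₀ t (a • φ + (1 - a) • ψ))) ∧
      (∀ φ : Pt K t → ℝ, memCb K t φ → ∀ αt lt : ℝ,
        UQ K Qhat (u t) x₀ t (fun a => φ a + αt * a.1 + lt) =
          UQ K Qhat (u t) x₀ t φ + ((αt * x₀ + lt : ℝ) : EReal)) := by
  haveI hprob : IsProbabilityMeasure Qhat := hQhat.1
  intro t
  haveI : IsProbabilityMeasure (margT K t Qhat) := isProb_margT K Qhat t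
  have hnebot : ∀ φ : Pt K t → ℝ, memCb K t φ → UQ K Qhat (u t) x₀ t φ ≠ ⊥ := by
    intro φ hφ h
    obtain ⟨M, hM⟩ := hφ.2
    have := le_UQ K x₀ hQhat t (hmono t) (hu0 t) hM
    rw [h, le_bot_iff] at this
    exact (EReal.coe_ne_bot _) this
  have hnetop : ∀ φ : Pt K t → ℝ, memCb K t φ → UQ K Qhat (u t) x₀ t φ ≠ ⊤ := by
    intro φ hφ h
    have := UQ_le_integral K x₀ hK0 hKcpt hQhat t (hle t) hφ
    rw [h] at this
    exact (EReal.coe_ne_top _) (top_le_iff.1 this)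
  have hzero : memCb K t (fun _ : Pt K t => (0 : ℝ)) :=
    ⟨continuous_const, ⟨0, fun a => by simp⟩⟩
  refine ⟨⟨fun φ hφ => ⟨hnebot φ hφ, hnetop φ hφ⟩, ?_⟩, ⟨?_, ?_⟩, ?_⟩
  · -- UQ 0 = 0
    refine le_antisymm ?_ ?_
    · have := UQ_le_integral K x₀ hK0 hKcpt hQhat t (hle t) hzero
      simpa using this
    · have := le_UQ K x₀ hQhat t (hmono t) (hu0 t)
        (φ := fun _ : Pt K t => (0 : ℝ)) (M := 0) (fun a => by simp)
      simpa using this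
  · -- monotone
    exact fun φ ψ hφ hψ h => UQ_mono K x₀ Qhat t (hmono t) h
  · -- concave
    intro φ ψ hφ hψ a ha0 ha1
    rcases eq_or_lt_of_le ha0 with h0 | h0
    · have hfun : a • φ + (1 - a) • ψ = ψ := by
        funext x; simp [← h0]
      rw [hfun, ← h0]
      rw [show ((0 : ℝ) : EReal) = 0 from rfl, zero_mul, zero_add]
      rw [show ((1 - 0 : ℝ) : EReal) = 1 by norm_num, one_mul]
    rcases eq_or_lt_of_le ha1 with h1 | h1
    · have hfun : a • φ + (1 - a) • ψ = φ := by
        funext x; simp [h1]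
      rw [hfun, h1]
      rw [show ((1 - 1 : ℝ) : EReal) = 0 by norm_num, zero_mul, add_zero]
      rw [show ((1 : ℝ) : EReal) = 1 from rfl, one_mul]
    have hfun : a • φ + (1 - a) • ψ = fun x => a * φ x + (1 - a) * ψ x := by
      funext x; simp [smul_eq_mul]
    rw [hfun]
    exact UQ_concave K x₀ hK0 hKcpt hQhat t (hmono t) (hu0 t) (hle t)
      (hconc t) hφ hψ h0 h1
  · -- stock additive
    exact fun φ hφ αt lt => UQ_stock K Qhat (u t) x₀ t φ αt lt


end EMOT
end
end
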